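/- arXiv:1806.03509 — 9 statements merged into one kernel-verified Lean document; each statement's English description precedes it below -/
import Mathlib

section
/- For any r-differential poset P, the rank sizes weakly increase: p_n ≤ p_{n+1} for all n ≥ 0. -/
open Classical in
/-- The up operator `U_n : ℚP_n → ℚP_{n+1}` of a graded poset with rank function `rank`,
sending each basis element `x ∈ P_n` to the sum of the elements covering it. -/
noncomputable def upMap {P : Type*} [PartialOrder P] (rank : P → ℕ)
    [∀ m : ℕ, Fintype {x : P // rank x = m}] (n : ℕ) :
    ({x : P // rank x = n} → ℚ) →ₗ[ℚ] ({x : P // rank x = n + 1} → ℚ) :=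
  Matrix.mulVecLin (fun (y : {x : P // rank x = n + 1}) (x : {x : P // rank x = n}) =>
    if (x : P) ⋖ (y : P) then 1 else 0)

open Classical in
/-- The down operator `D_n : ℚP_n → ℚP_{n-1}` of a graded poset with rank function `rank`,
sending each basis element `x ∈ P_n` to the sum of the elements it covers.
(For `n = 0` this is the zero map on `ℚP_0` in a graded poset, matching `D_0 = 0`.) -/
noncomputable def downMap {P : Type*} [PartialOrder P] (rank : P → ℕ)
    [∀ m : ℕ, Fintype {x : P // rank x = m}] (n : ℕ) :
    ({x : P // rank x = n} → ℚ) →ₗ[ℚ] ({x : P // rank x = n - 1} → ℚ) :=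
  Matrix.mulVecLin (fun (z : {x : P // rank x = n - 1}) (x : {x : P // rank x = n}) =>
    if (z : P) ⋖ (x : P) then 1 else 0)

/-- `P` (a partial order with rank function `rank`, all rank sets finite) is an
`r`-differential poset: `r > 0`, there is a least element `0̂` of rank `0`, the poset is
graded (covers raise rank by exactly one, the rank function is strictly monotone, and every
element of nonzero rank covers something), and `D_{n+1} U_n - U_{n-1} D_n = r·I` on `ℚP_n`
for all `n ≥ 0` (for `n = 0` the relation reads `D_1 U_0 = r·I`, since `D_0 = 0`). -/
structure IsDifferentialPoset {P : Type*} [PartialOrder P] (rank : P → ℕ)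
    [∀ m : ℕ, Fintype {x : P // rank x = m}] (r : ℕ) : Prop where
  r_pos : 0 < r
  exists_bot : ∃ b : P, rank b = 0 ∧ ∀ x : P, b ≤ x
  rank_covBy : ∀ x y : P, x ⋖ y → rank y = rank x + 1
  rank_strictMono : ∀ x y : P, x < y → rank x < rank y
  exists_covBy_of_rank_ne_zero : ∀ x : P, rank x ≠ 0 → ∃ y : P, y ⋖ x
  diff_zero : downMap rank 1 ∘ₗ upMap rank 0 = (r : ℚ) • LinearMap.id
  diff : ∀ n : ℕ,
    LinearMap.comp (M₃ := {x : P // rank x = n + 1} → ℚ)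
        (downMap rank (n + 2)) (upMap rank (n + 1))
      - upMap rank n ∘ₗ downMap rank (n + 1) = (r : ℚ) • LinearMap.id

/-! The up operator `U_n` is injective, hence `p_n ≤ p_{n+1}`. Indeed `D_{n+1}` is the
transpose of `U_n`, so if `U_n v = 0` then pairing `D_{n+1} U_n v - U_{n-1} D_n v = r v` with `v`
gives `-‖D_n v‖² = r ‖v‖²`, and `r > 0` forces `v = 0`. -/

open Matrix

theorem Matrix.mulVec_injective_of_gram_sub_eq_smul {R m n k : Type*}
    [CommRing R] [LinearOrder R] [IsStrictOrderedRing R] [Fintype m] [Fintype n] [Fintype k]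
    (A : Matrix m n R) (B : Matrix n k R) {c : R} (hc : 0 < c)
    (h : ∀ v, Aᵀ *ᵥ (A *ᵥ v) - B *ᵥ (Bᵀ *ᵥ v) = c • v) : Function.Injective A.mulVec := by
  refine (injective_iff_map_eq_zero A.mulVecLin).2 fun v hv => ?_
  rw [mulVecLin_apply] at hv
  have key : c * (v ⬝ᵥ v) = -((Bᵀ *ᵥ v) ⬝ᵥ (Bᵀ *ᵥ v)) := by
    have := congrArg (v ⬝ᵥ ·) (h v)
    rw [hv, mulVec_zero, zero_sub, dotProduct_neg, dotProduct_smul, smul_eq_mul,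
      dotProduct_mulVec, ← mulVec_transpose] at this
    exact this.symm
  have hBv : 0 ≤ (Bᵀ *ᵥ v) ⬝ᵥ (Bᵀ *ᵥ v) := Finset.sum_nonneg fun i _ => mul_self_nonneg _
  have hv₀ : 0 ≤ v ⬝ᵥ v := Finset.sum_nonneg fun i _ => mul_self_nonneg _
  have hvv : v ⬝ᵥ v = 0 :=
    le_antisymm (nonpos_of_mul_nonpos_right (key ▸ neg_nonpos.2 hBv) hc) hv₀
  exact dotProduct_self_eq_zero.1 hvv

open Classical in
noncomputable def coverMatrix {P : Type*} [PartialOrder P] (rank : P → ℕ)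
    [∀ m : ℕ, Fintype {x : P // rank x = m}] (n : ℕ) :
    Matrix {x : P // rank x = n + 1} {x : P // rank x = n} ℚ :=
  .of fun y x => if (x : P) ⋖ (y : P) then 1 else 0

-- `upMap rank n` and `downMap rank (n + 1)` are definitionally `coverMatrix rank n` and its
-- transpose acting on vectors.
theorem IsDifferentialPoset.coverMatrix_mulVec_injective {P : Type*} [PartialOrder P]
    {rank : P → ℕ} [∀ m : ℕ, Fintype {x : P // rank x = m}] {r : ℕ}
    (hP : IsDifferentialPoset rank r) (n : ℕ) : Function.Injective (coverMatrix rank n).mulVec := by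
  have hr : (0 : ℚ) < r := mod_cast hP.r_pos
  cases n with
  | zero =>
    -- `D_0 = 0`: no term `U_{-1} D_0`, modelled by an empty `B`.
    refine (coverMatrix rank 0).mulVec_injective_of_gram_sub_eq_smul
      (0 : Matrix _ Empty ℚ) hr fun v => ?_
    rw [zero_mulVec, sub_zero]
    exact LinearMap.congr_fun hP.diff_zero v
  | succ n =>
    exact (coverMatrix rank (n + 1)).mulVec_injective_of_gram_sub_eq_smul
      (coverMatrix rank n) hr fun v => LinearMap.congr_fun (hP.diff n) v

/-- Stanley. For any `r`-differential poset, the rank sizes weakly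
increase: `p_n ≤ p_{n+1}` for all `n ≥ 0`. -/
theorem rank_sizes_weakly_increase {P : Type*} [PartialOrder P] (rank : P → ℕ)
    [∀ m : ℕ, Fintype {x : P // rank x = m}] (r : ℕ)
    (hP : IsDifferentialPoset rank r) (n : ℕ) :
    Fintype.card {x : P // rank x = n} ≤ Fintype.card {x : P // rank x = n + 1} := by
  simpa only [Module.finrank_fintype_fun_eq_card] using
    LinearMap.finrank_le_finrank_of_injective (f := (coverMatrix rank n).mulVecLin)
      (hP.coverMatrix_mulVec_injective n)
end

section
/- For any r-differential poset P and any n ≥ 1, Δp_n ≥ 1, unless r = n = 1. -/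
namespace MillerAux
set_option linter.unusedSectionVars false
set_option maxHeartbeats 1000000

open Matrix

/-! ### Generic linear-algebra helpers over `ℚ` -/

lemma dot_self_nonneg {n : Type*} [Fintype n] (v : n → ℚ) : 0 ≤ v ⬝ᵥ v :=
  Finset.sum_nonneg fun i _ => mul_self_nonneg (v i)

lemma dot_self_pos {n : Type*} [Fintype n] {v : n → ℚ} (hv : v ≠ 0) : 0 < v ⬝ᵥ v := by
  rcases (dot_self_nonneg v).lt_or_eq with h | h
  · exact h
  · exact absurd (dotProduct_self_eq_zero.mp h.symm) hv

lemma mulVec_dot {m n : Type*} [Fintype m] [Fintype n] (M : Matrix m n ℚ) (a : n → ℚ)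
    (c : m → ℚ) : (M *ᵥ a) ⬝ᵥ c = a ⬝ᵥ (Mᵀ *ᵥ c) := by
  rw [Matrix.dotProduct_mulVec a, Matrix.vecMul_transpose, dotProduct_comm]

lemma mulVec_one_apply {m n : Type*} [Fintype m] [Fintype n] (M : Matrix m n ℚ) (x : m) :
    (M *ᵥ (1 : n → ℚ)) x = ∑ z, M x z := by
  simp [Matrix.mulVec, dotProduct]

lemma mulVecLin_inj {m n : Type*} [Fintype n] [Fintype m] [DecidableEq n]
    {M N : Matrix m n ℚ} (h : M.mulVecLin = N.mulVecLin) : M = N := by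
  ext i j
  have := congrArg (fun f => (f (Pi.single j 1)) i) h
  simpa [Matrix.mulVecLin_apply, Matrix.mulVec_single] using this

lemma mulVecLin_smul_one {n : Type*} [Fintype n] [DecidableEq n] (c : ℚ) :
    ((c • (1 : Matrix n n ℚ))).mulVecLin = c • LinearMap.id := by
  ext v i
  simp [Matrix.mulVecLin_apply, Matrix.smul_mulVec, Matrix.one_mulVec,
    Matrix.one_apply, Pi.single_apply]

lemma exists_symm_inv {κ : Type*} [Fintype κ] [DecidableEq κ] (N : Matrix κ κ ℚ)
    (hsym : Nᵀ = N) (hpos : ∀ v : κ → ℚ, v ≠ 0 → 0 < v ⬝ᵥ (N *ᵥ v)) :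
    ∃ B : Matrix κ κ ℚ, N * B = 1 ∧ B * N = 1 ∧ Bᵀ = B ∧
      (∀ v : κ → ℚ, 0 ≤ v ⬝ᵥ (B *ᵥ v)) ∧
      (∀ v : κ → ℚ, v ≠ 0 → 0 < v ⬝ᵥ (B *ᵥ v)) := by
  have hinj : Function.Injective (Matrix.toLin' N) := by
    rw [← LinearMap.ker_eq_bot, LinearMap.ker_eq_bot']
    intro v hv
    by_contra hv0
    have h2 := hpos v hv0
    rw [show N *ᵥ v = Matrix.toLin' N v from rfl, hv] at h2
    simp at h2
  have hbij : Function.Bijective (Matrix.toLin' N) :=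
    ⟨hinj, (LinearMap.injective_iff_surjective).mp hinj⟩
  set e := LinearEquiv.ofBijective (Matrix.toLin' N) hbij with he
  set B := LinearMap.toMatrix' e.symm.toLinearMap with hB
  have hNB : N * B = 1 := by
    apply Matrix.toLin'.injective
    rw [Matrix.toLin'_mul, hB, Matrix.toLin'_toMatrix', Matrix.toLin'_one]
    refine LinearMap.ext fun v => ?_
    exact e.apply_symm_apply v
  have hBN : B * N = 1 := by
    apply Matrix.toLin'.injective
    rw [Matrix.toLin'_mul, hB, Matrix.toLin'_toMatrix', Matrix.toLin'_one]
    refine LinearMap.ext fun v => ?_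
    exact e.symm_apply_apply v
  have hBtN : Bᵀ * N = 1 := by
    have h3 := congrArg Matrix.transpose hNB
    rwa [Matrix.transpose_mul, hsym, Matrix.transpose_one] at h3
  have hBT : Bᵀ = B := by
    calc Bᵀ = Bᵀ * (N * B) := by rw [hNB, Matrix.mul_one]
    _ = (Bᵀ * N) * B := by rw [Matrix.mul_assoc]
    _ = B := by rw [hBtN, Matrix.one_mul]
  have key : ∀ v : κ → ℚ, v ≠ 0 → 0 < v ⬝ᵥ (B *ᵥ v) := by
    intro v hv
    set w := B *ᵥ v with hw
    have hNw : N *ᵥ w = v := by rw [hw, Matrix.mulVec_mulVec, hNB, Matrix.one_mulVec]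
    have hwne : w ≠ 0 := by
      intro h0
      rw [h0, Matrix.mulVec_zero] at hNw
      exact hv hNw.symm
    have h4 : v ⬝ᵥ (B *ᵥ v) = w ⬝ᵥ (N *ᵥ w) := by
      rw [← hw, ← hNw, mulVec_dot, hsym, dotProduct_comm, mulVec_dot, hsym]
    rw [h4]
    exact hpos w hwne
  refine ⟨B, hNB, hBN, hBT, ?_, key⟩
  intro v
  by_cases hv : v = 0
  · simp [hv]
  · exact (key v hv).le

/-! ### The cover matrices and the differential relations -/

variable {P : Type*} [PartialOrder P] (rank : P → ℕ)
    [∀ m : ℕ, Fintype {x : P // rank x = m}] (r : ℕ)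

attribute [local instance] Classical.propDecidable

open Classical in
noncomputable def AM (j : ℕ) : Matrix {x : P // rank x = j + 1} {x : P // rank x = j} ℚ :=
  Matrix.of fun y x => if (x : P) ⋖ (y : P) then 1 else 0

lemma upMap_eq (j : ℕ) : upMap rank j = (AM rank j).mulVecLin := rfl
lemma downMap_eq (j : ℕ) : downMap rank (j + 1) = (AM rank j)ᵀ.mulVecLin := rfl

lemma AM_entry_sq (j : ℕ) (y) (x) : AM rank j y x * AM rank j y x = AM rank j y x := by
  by_cases h : (x : P) ⋖ (y : P) <;> simp [AM, h]

lemma AM_entry_nonneg (j : ℕ) (y) (x) : 0 ≤ AM rank j y x := by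
  by_cases h : (x : P) ⋖ (y : P) <;> simp [AM, h]

lemma AM_entry_le_one (j : ℕ) (y) (x) : AM rank j y x ≤ 1 := by
  by_cases h : (x : P) ⋖ (y : P) <;> simp [AM, h]

variable (hP : IsDifferentialPoset rank r)
include hP

lemma TM_zero : (AM rank 0)ᵀ * AM rank 0 = (r : ℚ) • 1 := by
  apply mulVecLin_inj
  rw [Matrix.mulVecLin_mul, mulVecLin_smul_one]
  exact hP.diff_zero

lemma TM_rel (j : ℕ) :
    (AM rank (j + 1))ᵀ * AM rank (j + 1) = AM rank j * (AM rank j)ᵀ + (r : ℚ) • 1 := by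
  apply mulVecLin_inj
  have h := hP.diff j
  rw [sub_eq_iff_eq_add'] at h
  rw [Matrix.mulVecLin_mul, Matrix.mulVecLin_add, Matrix.mulVecLin_mul, mulVecLin_smul_one]
  exact h

/-- quadratic form of AᵀA -/
lemma quad_AtA (j : ℕ) (v : {x : P // rank x = j} → ℚ) :
    v ⬝ᵥ (((AM rank j)ᵀ * AM rank j) *ᵥ v) = (AM rank j *ᵥ v) ⬝ᵥ (AM rank j *ᵥ v) := by
  rw [← Matrix.mulVec_mulVec, dotProduct_comm, mulVec_dot, Matrix.transpose_transpose]

lemma quad_AAt (j : ℕ) (v : {x : P // rank x = j + 1} → ℚ) :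
    v ⬝ᵥ ((AM rank j * (AM rank j)ᵀ) *ᵥ v)
      = ((AM rank j)ᵀ *ᵥ v) ⬝ᵥ ((AM rank j)ᵀ *ᵥ v) := by
  rw [← Matrix.mulVec_mulVec, dotProduct_comm, mulVec_dot]

lemma quad_smul_one {κ : Type*} [Fintype κ] [DecidableEq κ] (c : ℚ) (v : κ → ℚ) :
    v ⬝ᵥ ((c • (1 : Matrix κ κ ℚ)) *ᵥ v) = c * (v ⬝ᵥ v) := by
  rw [Matrix.smul_mulVec, Matrix.one_mulVec, dotProduct_smul, smul_eq_mul]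

/-- T_j is positive definite, with `v ⬝ T_j v ≥ r ⟨v,v⟩`. -/
lemma TM_quad_lower (j : ℕ) (v : {x : P // rank x = j} → ℚ) :
    (r : ℚ) * (v ⬝ᵥ v) ≤ v ⬝ᵥ (((AM rank j)ᵀ * AM rank j) *ᵥ v) := by
  cases j with
  | zero =>
      rw [TM_zero rank r hP, quad_smul_one rank r hP]
  | succ i =>
      rw [TM_rel rank r hP i, Matrix.add_mulVec, dotProduct_add,
        quad_smul_one rank r hP, quad_AAt rank r hP]
      have := dot_self_nonneg ((AM rank i)ᵀ *ᵥ v)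
      linarith

lemma TM_pos (j : ℕ) (v : {x : P // rank x = j} → ℚ) (hv : v ≠ 0) :
    0 < v ⬝ᵥ (((AM rank j)ᵀ * AM rank j) *ᵥ v) := by
  have h1 := TM_quad_lower rank r hP j v
  have h2 := dot_self_pos hv
  have hr : (1 : ℚ) ≤ (r : ℚ) := by exact_mod_cast hP.r_pos
  nlinarith

lemma AM_mulVec_inj (j : ℕ) {v : {x : P // rank x = j} → ℚ}
    (hv : AM rank j *ᵥ v = 0) : v = 0 := by
  by_contra h0
  have h1 := TM_pos rank r hP j v h0
  rw [quad_AtA rank r hP, hv] at h1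
  simp at h1

/-! ### Cardinalities -/

lemma card_le_succ (j : ℕ) :
    Fintype.card {x : P // rank x = j} ≤ Fintype.card {x : P // rank x = j + 1} := by
  have hinj : Function.Injective (AM rank j).mulVecLin := by
    rw [← LinearMap.ker_eq_bot, LinearMap.ker_eq_bot']
    intro v hv
    exact AM_mulVec_inj rank r hP j hv
  have h := LinearMap.finrank_le_finrank_of_injective hinj
  simpa [Module.finrank_fintype_fun_eq_card] using h

lemma rank_zero_unique {b : P} (hb0 : rank b = 0) (hble : ∀ x : P, b ≤ x)
    {z : P} (hz : rank z = 0) : z = b := by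
  rcases (hble z).lt_or_eq with hlt | heq
  · have := hP.rank_strictMono _ _ hlt
    rw [hb0, hz] at this
    exact absurd this (lt_irrefl 0)
  · exact heq.symm

lemma card_zero : Fintype.card {x : P // rank x = 0} = 1 := by
  obtain ⟨b, hb0, hble⟩ := hP.exists_bot
  rw [Fintype.card_eq_one_iff]
  exact ⟨⟨b, hb0⟩, fun y => Subtype.ext (rank_zero_unique rank r hP hb0 hble y.2)⟩

lemma card_pos (j : ℕ) : 1 ≤ Fintype.card {x : P // rank x = j} := by
  induction j with
  | zero => rw [card_zero rank r hP]
  | succ i ih => exact le_trans ih (card_le_succ rank r hP i)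

lemma one_ne_zero_vec (j : ℕ) : (1 : {x : P // rank x = j} → ℚ) ≠ 0 := by
  have : Nonempty {x : P // rank x = j} := by
    rw [← Fintype.card_pos_iff]
    exact card_pos rank r hP j
  obtain ⟨x⟩ := this
  intro h
  have := congrFun h x
  simp at this

/-! ### Degree identities (this is where 0/1-ness of the cover matrices enters) -/

lemma col_sum (j : ℕ) (x : {x : P // rank x = j}) :
    ((AM rank j)ᵀ * AM rank j) x x = ∑ y, AM rank j y x := by
  rw [Matrix.mul_apply]
  simp only [Matrix.transpose_apply, AM_entry_sq]

lemma row_sum (j : ℕ) (x : {x : P // rank x = j + 1}) :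
    (AM rank j * (AM rank j)ᵀ) x x = ∑ z, AM rank j x z := by
  rw [Matrix.mul_apply]
  simp only [Matrix.transpose_apply, AM_entry_sq]

lemma deg (j : ℕ) :
    (AM rank (j + 1))ᵀ *ᵥ (1 : {x : P // rank x = j + 2} → ℚ)
      = AM rank j *ᵥ (1 : {x : P // rank x = j} → ℚ)
        + (r : ℚ) • (1 : {x : P // rank x = j + 1} → ℚ) := by
  funext x
  have h1 : ((AM rank (j + 1))ᵀ *ᵥ (1 : {x : P // rank x = j + 2} → ℚ)) x
      = ∑ y, AM rank (j + 1) y x := by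
    rw [mulVec_one_apply]
    simp only [Matrix.transpose_apply]
  rw [h1, ← col_sum rank r hP (j+1) x, TM_rel rank r hP j, Matrix.add_apply, row_sum rank r hP,
    Matrix.smul_apply, Matrix.one_apply_eq, Pi.add_apply, Pi.smul_apply, Pi.one_apply,
    mulVec_one_apply, smul_eq_mul, mul_one]

/-! ### The small cases n = 1, n = 2 -/

lemma bot_covby_rank_one {b : P} (hb0 : rank b = 0) (hble : ∀ x : P, b ≤ x)
    (y : {x : P // rank x = 1}) : b ⋖ (y : P) := by
  obtain ⟨z, hz⟩ := hP.exists_covBy_of_rank_ne_zero y.1 (by rw [y.2]; exact one_ne_zero)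
  have hzr : rank z = 0 := by
    have := hP.rank_covBy _ _ hz
    rw [y.2] at this
    omega
  rwa [rank_zero_unique rank r hP hb0 hble hzr] at hz

lemma card_one : Fintype.card {x : P // rank x = 1} = r := by
  obtain ⟨b, hb0, hble⟩ := hP.exists_bot
  have hb : ∀ y : {x : P // rank x = 1}, AM rank 0 y ⟨b, hb0⟩ = 1 := by
    intro y
    simp [AM, bot_covby_rank_one rank r hP hb0 hble y]
  have h1 : ((AM rank 0)ᵀ * AM rank 0) ⟨b, hb0⟩ ⟨b, hb0⟩ = (r : ℚ) := by
    rw [TM_zero rank r hP, Matrix.smul_apply, Matrix.one_apply_eq, smul_eq_mul, mul_one]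
  rw [col_sum rank r hP] at h1
  have h2 : ∑ y, AM rank 0 y ⟨b, hb0⟩ = (Fintype.card {x : P // rank x = 1} : ℚ) := by
    calc ∑ y, AM rank 0 y ⟨b, hb0⟩ = ∑ _y : {x : P // rank x = 1}, (1 : ℚ) :=
          Finset.sum_congr rfl fun y _ => hb y
    _ = (Fintype.card {x : P // rank x = 1} : ℚ) := by
          rw [Finset.sum_const, Finset.card_univ, nsmul_eq_mul, mul_one]
  rw [h2] at h1
  exact_mod_cast h1

lemma card_two : (r : ℕ) + 1 ≤ Fintype.card {x : P // rank x = 2} := by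
  obtain ⟨b, hb0, hble⟩ := hP.exists_bot
  -- pick an atom
  have h1 : Nonempty {x : P // rank x = 1} := by
    rw [← Fintype.card_pos_iff]
    exact card_pos rank r hP 1
  obtain ⟨a⟩ := h1
  -- (T 1)_{aa} = 1 + r
  have hdiag : ((AM rank 1)ᵀ * AM rank 1) a a = 1 + (r : ℚ) := by
    rw [TM_rel rank r hP 0, Matrix.add_apply, row_sum rank r hP, Matrix.smul_apply,
      Matrix.one_apply_eq, smul_eq_mul, mul_one]
    congr 1
    rw [Fintype.sum_eq_single (⟨b, hb0⟩ : {x : P // rank x = 0})]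
    · simp [AM, bot_covby_rank_one rank r hP hb0 hble a]
    · intro z hz
      exact absurd (Subtype.ext (rank_zero_unique rank r hP hb0 hble z.2)) hz
  -- (T 1)_{aa} = Σ_y A1 y a ≤ card
  have hle : ((AM rank 1)ᵀ * AM rank 1) a a
      ≤ (Fintype.card {x : P // rank x = 2} : ℚ) := by
    rw [col_sum rank r hP]
    calc ∑ y, AM rank 1 y a ≤ ∑ y : {x : P // rank x = 2}, (1 : ℚ) :=
          Finset.sum_le_sum fun y _ => AM_entry_le_one rank 1 y a
    _ = (Fintype.card {x : P // rank x = 2} : ℚ) := by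
          rw [Finset.sum_const, Finset.card_univ, nsmul_eq_mul, mul_one]
  rw [hdiag] at hle
  rw [Nat.add_comm]
  exact_mod_cast hle

/-! ### helpers for symmetric bilinear expansion -/

lemma symmdot {κ : Type*} [Fintype κ] {B : Matrix κ κ ℚ} (hBT : Bᵀ = B)
    (x y : κ → ℚ) : x ⬝ᵥ (B *ᵥ y) = y ⬝ᵥ (B *ᵥ x) := by
  rw [dotProduct_comm, mulVec_dot, hBT]

lemma dot_B_expand {κ : Type*} [Fintype κ] {B : Matrix κ κ ℚ} (hBT : Bᵀ = B)
    (a c : κ → ℚ) (s : ℚ) :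
    (a + s • c) ⬝ᵥ (B *ᵥ (a + s • c))
      = a ⬝ᵥ (B *ᵥ a) + 2 * s * (a ⬝ᵥ (B *ᵥ c)) + s ^ 2 * (c ⬝ᵥ (B *ᵥ c)) := by
  have hsym := symmdot rank r hP hBT c a
  simp only [Matrix.mulVec_add, Matrix.mulVec_smul, add_dotProduct,
    smul_dotProduct, dotProduct_add, dotProduct_smul, smul_eq_mul, hsym]
  ring

lemma one_dot_one {κ : Type*} [Fintype κ] :
    (1 : κ → ℚ) ⬝ᵥ (1 : κ → ℚ) = (Fintype.card κ : ℚ) := by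
  have h : ((1 : κ → ℚ) ⬝ᵥ (1 : κ → ℚ)) = ∑ _i : κ, (1 : ℚ) := by
    simp [dotProduct]
  rw [h, Finset.sum_const, Finset.card_univ, nsmul_eq_mul, mul_one]

/-! ### The key growth theorem -/

theorem key (t : ℕ) :
    Fintype.card {x : P // rank x = t + 2} < Fintype.card {x : P // rank x = t + 3} := by
  have hT2 : (AM rank (t + 2))ᵀ * AM rank (t + 2)
      = AM rank (t + 1) * (AM rank (t + 1))ᵀ + (r : ℚ) • 1 := TM_rel rank r hP (t + 1)
  have hT1 : (AM rank (t + 1))ᵀ * AM rank (t + 1)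
      = AM rank t * (AM rank t)ᵀ + (r : ℚ) • 1 := TM_rel rank r hP t
  set A0 := AM rank t with hA0
  set A1 := AM rank (t + 1) with hA1
  set A2 := AM rank (t + 2) with hA2
  set N1 := A2ᵀ * A2 with hN1
  set N2 := A1ᵀ * A1 + (r : ℚ) • 1 with hN2
  set N3 := A0ᵀ * A0 + (2 * (r : ℚ)) • 1 with hN3
  have hr1 : (1 : ℚ) ≤ (r : ℚ) := by exact_mod_cast hP.r_pos
  have hS1 : N1ᵀ = N1 := by
    rw [hN1, Matrix.transpose_mul, Matrix.transpose_transpose]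
  have hS2 : N2ᵀ = N2 := by
    rw [hN2, Matrix.transpose_add, Matrix.transpose_mul, Matrix.transpose_transpose,
      Matrix.transpose_smul, Matrix.transpose_one]
  have hS3 : N3ᵀ = N3 := by
    rw [hN3, Matrix.transpose_add, Matrix.transpose_mul, Matrix.transpose_transpose,
      Matrix.transpose_smul, Matrix.transpose_one]
  have hP1 : ∀ v, v ≠ 0 → 0 < v ⬝ᵥ (N1 *ᵥ v) := fun v hv => TM_pos rank r hP (t + 2) v hv
  have hP2 : ∀ v, v ≠ 0 → 0 < v ⬝ᵥ (N2 *ᵥ v) := by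
    intro v hv
    rw [hN2, Matrix.add_mulVec, dotProduct_add, quad_smul_one rank r hP]
    have h1 := TM_quad_lower rank r hP (t + 1) v
    have h2 := dot_self_pos hv
    nlinarith
  have hP3 : ∀ v, v ≠ 0 → 0 < v ⬝ᵥ (N3 *ᵥ v) := by
    intro v hv
    rw [hN3, Matrix.add_mulVec, dotProduct_add, quad_smul_one rank r hP]
    have h1 := TM_quad_lower rank r hP t v
    have h2 := dot_self_pos hv
    nlinarith
  classical
  obtain ⟨B1, hNB1, hBN1, hB1T, hB1nn, hB1pos⟩ := exists_symm_inv N1 hS1 hP1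
  obtain ⟨B2, hNB2, hBN2, hB2T, hB2nn, hB2pos⟩ := exists_symm_inv N2 hS2 hP2
  obtain ⟨B3, hNB3, hBN3, hB3T, hB3nn, hB3pos⟩ := exists_symm_inv N3 hS3 hP3
  -- intertwining relations
  have hI1 : N1 * A1 = A1 * N2 := by
    rw [hT2, hN2, Matrix.add_mul, Matrix.mul_add, Matrix.smul_mul, Matrix.one_mul,
      Matrix.mul_smul, Matrix.mul_one, Matrix.mul_assoc]
  have hI2 : N2 * A0 = A0 * N3 := by
    have h2r : ((2 * (r : ℚ)) • (1 : Matrix {x : P // rank x = t} {x : P // rank x = t} ℚ))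
        = (r : ℚ) • 1 + (r : ℚ) • 1 := by
      rw [← add_smul]
      ring_nf
    rw [hN2, hN3, hT1, h2r, Matrix.add_mul, Matrix.add_mul, Matrix.mul_add, Matrix.mul_add,
      Matrix.smul_mul, Matrix.one_mul, Matrix.mul_smul, Matrix.mul_one, Matrix.mul_assoc,
      add_assoc]
  have hBA1 : B1 * A1 = A1 * B2 := by
    calc B1 * A1 = B1 * A1 * (N2 * B2) := by rw [hNB2, Matrix.mul_one]
    _ = B1 * (A1 * N2) * B2 := by
          rw [Matrix.mul_assoc B1 A1 (N2 * B2), ← Matrix.mul_assoc A1 N2 B2,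
            ← Matrix.mul_assoc B1 (A1 * N2) B2]
    _ = B1 * (N1 * A1) * B2 := by rw [hI1]
    _ = A1 * B2 := by
          rw [← Matrix.mul_assoc B1 N1 A1, hBN1, Matrix.one_mul]
  have hBA0 : B2 * A0 = A0 * B3 := by
    calc B2 * A0 = B2 * A0 * (N3 * B3) := by rw [hNB3, Matrix.mul_one]
    _ = B2 * (A0 * N3) * B3 := by
          rw [Matrix.mul_assoc B2 A0 (N3 * B3), ← Matrix.mul_assoc A0 N3 B3,
            ← Matrix.mul_assoc B2 (A0 * N3) B3]
    _ = B2 * (N2 * A0) * B3 := by rw [hI2]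
    _ = A0 * B3 := by
          rw [← Matrix.mul_assoc B2 N2 A0, hBN2, Matrix.one_mul]
  have hAB1 : A1ᵀ * B1 = B2 * A1ᵀ := by
    have h := congrArg Matrix.transpose hBA1
    rwa [Matrix.transpose_mul, Matrix.transpose_mul, hB1T, hB2T] at h
  have hAB0 : A0ᵀ * B2 = B3 * A0ᵀ := by
    have h := congrArg Matrix.transpose hBA0
    rwa [Matrix.transpose_mul, Matrix.transpose_mul, hB2T, hB3T] at h
  -- vectors
  set one0 : {x : P // rank x = t} → ℚ := 1 with hone0
  set one1 : {x : P // rank x = t + 1} → ℚ := 1 with hone1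
  set one2 : {x : P // rank x = t + 2} → ℚ := 1 with hone2
  set one3 : {x : P // rank x = t + 3} → ℚ := 1 with hone3
  set u2 : {x : P // rank x = t + 2} → ℚ := A2ᵀ *ᵥ one3 with hu2
  set u1 : {x : P // rank x = t + 1} → ℚ := A1ᵀ *ᵥ one2 with hu1
  set u0 : {x : P // rank x = t} → ℚ := A0ᵀ *ᵥ one1 with hu0
  have hdeg2 : u2 = A1 *ᵥ one1 + (r : ℚ) • one2 := deg rank r hP (t + 1)
  have hdeg1 : u1 = A0 *ᵥ one0 + (r : ℚ) • one1 := deg rank r hP t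
  set z1 : {x : P // rank x = t + 1} → ℚ := u1 - one1 with hz1
  set z0 : {x : P // rank x = t} → ℚ := u0 - one0 with hz0
  have hu1z : u1 = z1 + (1 : ℚ) • one1 := by
    rw [hz1, one_smul, sub_add_cancel]
  have hu0z : u0 = z0 + one0 := by
    rw [hz0, sub_add_cancel]
  have hz1' : z1 = A0 *ᵥ one0 + ((r : ℚ) - 1) • one1 := by
    rw [hz1, hdeg1]
    ext x
    simp [sub_smul]
    ring
  -- scalars
  set G1 : ℚ := one2 ⬝ᵥ (B1 *ᵥ one2) with hG1
  set G2 : ℚ := one1 ⬝ᵥ (B2 *ᵥ one1) with hG2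
  set G3 : ℚ := one0 ⬝ᵥ (B3 *ᵥ one0) with hG3
  set Ze2 : ℚ := z1 ⬝ᵥ (B2 *ᵥ one1) with hZe2
  set Ze3 : ℚ := z0 ⬝ᵥ (B3 *ᵥ one0) with hZe3
  set V1 : ℚ := u2 ⬝ᵥ (B1 *ᵥ u2) with hV1
  set V2 : ℚ := u1 ⬝ᵥ (B2 *ᵥ u1) with hV2
  set Z2 : ℚ := z1 ⬝ᵥ (B2 *ᵥ z1) with hZ2
  set q0 : ℚ := (Fintype.card {x : P // rank x = t} : ℚ) with hq0
  set q1 : ℚ := (Fintype.card {x : P // rank x = t + 1} : ℚ) with hq1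
  set q2 : ℚ := (Fintype.card {x : P // rank x = t + 2} : ℚ) with hq2
  set q3 : ℚ := (Fintype.card {x : P // rank x = t + 3} : ℚ) with hq3
  -- dot helpers
  have dotA2 : ∀ y, one3 ⬝ᵥ (A2 *ᵥ y) = u2 ⬝ᵥ y := by
    intro y
    rw [dotProduct_comm one3 (A2 *ᵥ y), mulVec_dot, ← hu2, dotProduct_comm]
  have dotA1 : ∀ y, one2 ⬝ᵥ (A1 *ᵥ y) = u1 ⬝ᵥ y := by
    intro y
    rw [dotProduct_comm one2 (A1 *ᵥ y), mulVec_dot, ← hu1, dotProduct_comm]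
  have dotA0 : ∀ y, one1 ⬝ᵥ (A0 *ᵥ y) = u0 ⬝ᵥ y := by
    intro y
    rw [dotProduct_comm one1 (A0 *ᵥ y), mulVec_dot, ← hu0, dotProduct_comm]
  -- reduction identities
  have key1 : ∀ a b, (A1 *ᵥ a) ⬝ᵥ (B1 *ᵥ (A1 *ᵥ b))
      = a ⬝ᵥ b - (r : ℚ) * (a ⬝ᵥ (B2 *ᵥ b)) := by
    intro a b
    have h1 : B1 *ᵥ (A1 *ᵥ b) = A1 *ᵥ (B2 *ᵥ b) := by
      rw [Matrix.mulVec_mulVec, Matrix.mulVec_mulVec, hBA1]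
    have hAA : A1ᵀ * A1 = N2 - (r : ℚ) • 1 := eq_sub_of_add_eq hN2.symm
    have h2 : A1ᵀ *ᵥ (A1 *ᵥ (B2 *ᵥ b)) = b - (r : ℚ) • (B2 *ᵥ b) := by
      rw [Matrix.mulVec_mulVec, Matrix.mulVec_mulVec, hAA,
        Matrix.sub_mul, hNB2, Matrix.smul_mul, Matrix.one_mul, Matrix.sub_mulVec,
        Matrix.one_mulVec, Matrix.smul_mulVec]
    rw [h1, mulVec_dot, h2, dotProduct_sub, dotProduct_smul, smul_eq_mul]
  have key0 : ∀ a b, (A0 *ᵥ a) ⬝ᵥ (B2 *ᵥ (A0 *ᵥ b))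
      = a ⬝ᵥ b - (2 * (r : ℚ)) * (a ⬝ᵥ (B3 *ᵥ b)) := by
    intro a b
    have h1 : B2 *ᵥ (A0 *ᵥ b) = A0 *ᵥ (B3 *ᵥ b) := by
      rw [Matrix.mulVec_mulVec, Matrix.mulVec_mulVec, hBA0]
    have hAA : A0ᵀ * A0 = N3 - (2 * (r : ℚ)) • 1 := eq_sub_of_add_eq hN3.symm
    have h2 : A0ᵀ *ᵥ (A0 *ᵥ (B3 *ᵥ b)) = b - (2 * (r : ℚ)) • (B3 *ᵥ b) := by
      rw [Matrix.mulVec_mulVec, Matrix.mulVec_mulVec, hAA,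
        Matrix.sub_mul, hNB3, Matrix.smul_mul, Matrix.one_mul, Matrix.sub_mulVec,
        Matrix.one_mulVec, Matrix.smul_mulVec]
    rw [h1, mulVec_dot, h2, dotProduct_sub, dotProduct_smul, smul_eq_mul]
  have cross1 : ∀ a c, (A1 *ᵥ a) ⬝ᵥ (B1 *ᵥ c) = a ⬝ᵥ (B2 *ᵥ (A1ᵀ *ᵥ c)) := by
    intro a c
    rw [mulVec_dot, Matrix.mulVec_mulVec, hAB1, ← Matrix.mulVec_mulVec]
  have cross0 : ∀ a c, (A0 *ᵥ a) ⬝ᵥ (B2 *ᵥ c) = a ⬝ᵥ (B3 *ᵥ (A0ᵀ *ᵥ c)) := by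
    intro a c
    rw [mulVec_dot, Matrix.mulVec_mulVec, hAB0, ← Matrix.mulVec_mulVec]
  -- the five structural identities
  have S2 : q2 = V2 + (r : ℚ) * G1 := by
    have hmat : N1 * B1 = A1 * (B2 * A1ᵀ) + (r : ℚ) • B1 := by
      rw [hT2, Matrix.add_mul, Matrix.smul_mul, Matrix.one_mul, Matrix.mul_assoc, hAB1]
    calc q2 = one2 ⬝ᵥ one2 := (one_dot_one rank r hP).symm
    _ = one2 ⬝ᵥ ((N1 * B1) *ᵥ one2) := by rw [hNB1, Matrix.one_mulVec]
    _ = one2 ⬝ᵥ ((A1 * (B2 * A1ᵀ)) *ᵥ one2) + (r : ℚ) * G1 := by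
        rw [hmat, Matrix.add_mulVec, dotProduct_add, Matrix.smul_mulVec,
          dotProduct_smul, smul_eq_mul, ← hG1]
    _ = V2 + (r : ℚ) * G1 := by
        rw [← Matrix.mulVec_mulVec, dotA1, ← Matrix.mulVec_mulVec, ← hu1, ← hV2]
  have hcr1 : (A1 *ᵥ one1) ⬝ᵥ (B1 *ᵥ one2) = Ze2 + G2 := by
    rw [cross1, ← hu1, symmdot rank r hP hB2T one1 u1, hu1z, add_dotProduct,
      smul_dotProduct, smul_eq_mul, one_mul, ← hZe2, ← hG2]
  have S1 : V1 = q1 + (r : ℚ) * G2 + 2 * (r : ℚ) * Ze2 + (r : ℚ) ^ 2 * G1 := by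
    have hexp := dot_B_expand rank r hP hB1T (A1 *ᵥ one1) one2 (r : ℚ)
    have hk := key1 one1 one1
    rw [one_dot_one rank r hP, ← hq1, ← hG2] at hk
    calc V1 = u2 ⬝ᵥ (B1 *ᵥ u2) := hV1
    _ = (A1 *ᵥ one1 + (r : ℚ) • one2) ⬝ᵥ (B1 *ᵥ (A1 *ᵥ one1 + (r : ℚ) • one2)) := by
        rw [← hdeg2]
    _ = (A1 *ᵥ one1) ⬝ᵥ (B1 *ᵥ (A1 *ᵥ one1))
          + 2 * (r : ℚ) * ((A1 *ᵥ one1) ⬝ᵥ (B1 *ᵥ one2))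
          + (r : ℚ) ^ 2 * (one2 ⬝ᵥ (B1 *ᵥ one2)) := hexp
    _ = (q1 - (r : ℚ) * G2) + 2 * (r : ℚ) * (Ze2 + G2) + (r : ℚ) ^ 2 * G1 := by
        rw [hk, hcr1, ← hG1]
    _ = q1 + (r : ℚ) * G2 + 2 * (r : ℚ) * Ze2 + (r : ℚ) ^ 2 * G1 := by ring
  have S3 : V2 = Z2 + 2 * Ze2 + G2 := by
    have hexp := dot_B_expand rank r hP hB2T z1 one1 (1 : ℚ)
    calc V2 = u1 ⬝ᵥ (B2 *ᵥ u1) := hV2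
    _ = (z1 + (1 : ℚ) • one1) ⬝ᵥ (B2 *ᵥ (z1 + (1 : ℚ) • one1)) := by rw [← hu1z]
    _ = z1 ⬝ᵥ (B2 *ᵥ z1) + 2 * 1 * (z1 ⬝ᵥ (B2 *ᵥ one1))
          + (1 : ℚ) ^ 2 * (one1 ⬝ᵥ (B2 *ᵥ one1)) := hexp
    _ = Z2 + 2 * Ze2 + G2 := by rw [← hZ2, ← hZe2, ← hG2]; ring
  have hcr0 : (A0 *ᵥ one0) ⬝ᵥ (B2 *ᵥ one1) = Ze3 + G3 := by
    rw [cross0, ← hu0, symmdot rank r hP hB3T one0 u0, hu0z, add_dotProduct,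
      ← hZe3, ← hG3]
  have S4 : Z2 = q0 - 2 * (r : ℚ) * G3 + 2 * ((r : ℚ) - 1) * (Ze3 + G3)
      + ((r : ℚ) - 1) ^ 2 * G2 := by
    have hexp := dot_B_expand rank r hP hB2T (A0 *ᵥ one0) one1 ((r : ℚ) - 1)
    have hk := key0 one0 one0
    rw [one_dot_one rank r hP, ← hq0, ← hG3] at hk
    calc Z2 = z1 ⬝ᵥ (B2 *ᵥ z1) := hZ2
    _ = (A0 *ᵥ one0 + ((r : ℚ) - 1) • one1) ⬝ᵥ
          (B2 *ᵥ (A0 *ᵥ one0 + ((r : ℚ) - 1) • one1)) := by rw [← hz1']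
    _ = (A0 *ᵥ one0) ⬝ᵥ (B2 *ᵥ (A0 *ᵥ one0))
          + 2 * ((r : ℚ) - 1) * ((A0 *ᵥ one0) ⬝ᵥ (B2 *ᵥ one1))
          + ((r : ℚ) - 1) ^ 2 * (one1 ⬝ᵥ (B2 *ᵥ one1)) := hexp
    _ = q0 - 2 * (r : ℚ) * G3 + 2 * ((r : ℚ) - 1) * (Ze3 + G3)
          + ((r : ℚ) - 1) ^ 2 * G2 := by
        rw [hk, hcr0, ← hG2]
  have S5 : Ze2 = Ze3 + G3 + ((r : ℚ) - 1) * G2 := by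
    calc Ze2 = z1 ⬝ᵥ (B2 *ᵥ one1) := hZe2
    _ = (A0 *ᵥ one0 + ((r : ℚ) - 1) • one1) ⬝ᵥ (B2 *ᵥ one1) := by rw [← hz1']
    _ = (A0 *ᵥ one0) ⬝ᵥ (B2 *ᵥ one1) + ((r : ℚ) - 1) * (one1 ⬝ᵥ (B2 *ᵥ one1)) := by
        rw [add_dotProduct, smul_dotProduct, smul_eq_mul]
    _ = Ze3 + G3 + ((r : ℚ) - 1) * G2 := by rw [hcr0, ← hG2]
  -- Cauchy–Schwarz: V1 ≤ q3
  have hNw : N1 *ᵥ (B1 *ᵥ u2) = u2 := by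
    rw [Matrix.mulVec_mulVec, hNB1, Matrix.one_mulVec]
  have hd1 : one3 ⬝ᵥ (A2 *ᵥ (B1 *ᵥ u2)) = V1 := by
    rw [dotA2, ← hV1]
  have hd2 : (A2 *ᵥ (B1 *ᵥ u2)) ⬝ᵥ (A2 *ᵥ (B1 *ᵥ u2)) = V1 := by
    rw [mulVec_dot, Matrix.mulVec_mulVec (B1 *ᵥ u2) A2ᵀ A2, ← hN1, hNw, dotProduct_comm, ← hV1]
  have hd1' : (A2 *ᵥ (B1 *ᵥ u2)) ⬝ᵥ one3 = V1 := by
    rw [dotProduct_comm, hd1]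
  have hCS : V1 ≤ q3 := by
    have hnn := dot_self_nonneg (one3 - A2 *ᵥ (B1 *ᵥ u2))
    rw [sub_dotProduct, dotProduct_sub, dotProduct_sub,
      one_dot_one rank r hP, hd1, hd1', hd2] at hnn
    rw [← hq3] at hnn
    linarith
  -- positivity and conclusion
  have hG3pos : 0 < G3 := hB3pos one0 (one_ne_zero_vec rank r hP t)
  have hG2nn : 0 ≤ G2 := hB2nn one1
  have hG1nn : 0 ≤ G1 := hB1nn one2
  have hq01 : q0 ≤ q1 := by
    rw [hq0, hq1]
    exact_mod_cast card_le_succ rank r hP t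
  have hmain : V1 - q2 = (q1 - q0) + 2 * (r : ℚ) * G3
      + (r : ℚ) * ((r : ℚ) - 1) * (G2 + G1) := by
    linear_combination S1 - S2 - S3 - S4 + (2 * (r : ℚ) - 2) * S5
  have hterm1 : 0 < 2 * (r : ℚ) * G3 := by
    have : (0 : ℚ) < 2 * (r : ℚ) := by linarith
    exact mul_pos this hG3pos
  have hterm2 : 0 ≤ (r : ℚ) * ((r : ℚ) - 1) * (G2 + G1) := by
    apply mul_nonneg
    · apply mul_nonneg <;> linarith
    · linarith
  have hqlt : q2 < q3 := by linarith
  rw [hq2, hq3] at hqlt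
  exact_mod_cast hqlt


end MillerAux

/-- Miller. For any `r`-differential poset and any `n ≥ 1`,
`Δp_n = p_n - p_{n-1} ≥ 1`, unless `r = n = 1`. -/
theorem rank_gap_pos {P : Type*} [PartialOrder P] (rank : P → ℕ)
    [∀ m : ℕ, Fintype {x : P // rank x = m}] (r : ℕ)
    (hP : IsDifferentialPoset rank r) (n : ℕ) (hn : 1 ≤ n)
    (h : ¬ (r = 1 ∧ n = 1)) :
    Fintype.card {x : P // rank x = n - 1} + 1 ≤ Fintype.card {x : P // rank x = n} := by
  classical
  obtain ⟨m, rfl⟩ : ∃ m, n = m + 1 := ⟨n - 1, (Nat.succ_pred_eq_of_pos hn).symm⟩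
  simp only [Nat.add_sub_cancel]
  rcases m with _ | _ | t
  · -- n = 1, so r ≥ 2
    have hr : r ≠ 1 := fun hr1 => h ⟨hr1, rfl⟩
    have hr2 : 2 ≤ r := by have := hP.r_pos; omega
    have h0 : Fintype.card {x : P // rank x = 0} = 1 := MillerAux.card_zero rank r hP
    have h1 : Fintype.card {x : P // rank x = 1} = r := MillerAux.card_one rank r hP
    show Fintype.card {x : P // rank x = 0} + 1 ≤ Fintype.card {x : P // rank x = 1}
    omega
  · -- n = 2
    have h1 : Fintype.card {x : P // rank x = 1} = r := MillerAux.card_one rank r hP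
    have h2 : r + 1 ≤ Fintype.card {x : P // rank x = 2} := MillerAux.card_two rank r hP
    show Fintype.card {x : P // rank x = 1} + 1 ≤ Fintype.card {x : P // rank x = 2}
    omega
  · -- n = t + 3
    exact Nat.succ_le_of_lt (MillerAux.key rank r hP t)
end

section
/- Let P be an r-differential poset. Then for all n ≥ 0 the up operator U_n : ℚP_n → ℚP_{n+1} is injective. -/
open Classical in
lemma downMap_eq_transpose {P : Type*} [PartialOrder P] (rank : P → ℕ)
    [∀ m : ℕ, Fintype {x : P // rank x = m}] (n : ℕ) :
    downMap rank (n + 1) = Matrix.mulVecLin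
      (Matrix.transpose (fun (y : {x : P // rank x = n + 1}) (x : {x : P // rank x = n}) =>
        if (x : P) ⋖ (y : P) then 1 else 0)) := by
  unfold downMap
  congr 1

open Classical in
lemma key_dot {P : Type*} [PartialOrder P] (rank : P → ℕ)
    [∀ m : ℕ, Fintype {x : P // rank x = m}] (n : ℕ)
    (v : {x : P // rank x = n + 1} → ℚ) :
    dotProduct (downMap rank (n + 1) v) (downMap rank (n + 1) v)
      = dotProduct v (upMap rank n (downMap rank (n + 1) v)) := by
  set A : Matrix {x : P // rank x = n + 1} {x : P // rank x = n} ℚ :=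
    fun y x => if (x : P) ⋖ (y : P) then 1 else 0 with hA
  rw [downMap_eq_transpose]
  show dotProduct ((Matrix.transpose A).mulVec v) ((Matrix.transpose A).mulVec v)
      = dotProduct v (A.mulVec ((Matrix.transpose A).mulVec v))
  rw [show (Matrix.transpose A).mulVec v = Matrix.vecMul v A from Matrix.mulVec_transpose A v,
    Matrix.dotProduct_mulVec]

lemma dot_self_eq_zero {ι : Type*} [Fintype ι] {v : ι → ℚ}
    (h : dotProduct v v = 0) : v = 0 := by
  funext i
  have := (Finset.sum_eq_zero_iff_of_nonneg (fun j _ => mul_self_nonneg (v j))).mp h i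
    (Finset.mem_univ i)
  simpa [mul_self_eq_zero] using this

/-- Stanley. In an `r`-differential poset, the up operator
`U_n : ℚP_n → ℚP_{n+1}` is injective for every `n ≥ 0`. -/
theorem upMap_injective {P : Type*} [PartialOrder P] (rank : P → ℕ)
    [∀ m : ℕ, Fintype {x : P // rank x = m}] (r : ℕ)
    (hP : IsDifferentialPoset rank r) (n : ℕ) :
    Function.Injective (upMap rank n) := by
  rw [← LinearMap.ker_eq_bot, LinearMap.ker_eq_bot']
  intro v hv
  have hr : (r : ℚ) ≠ 0 := by exact_mod_cast hP.r_pos.ne'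
  cases n with
  | zero =>
    have := congrFun (congrArg DFunLike.coe hP.diff_zero) v
    simp only [LinearMap.comp_apply, hv, map_zero, LinearMap.smul_apply,
      LinearMap.id_apply] at this
    have : (r : ℚ) • v = 0 := this.symm
    simpa [hr] using this
  | succ m =>
    have hdiff := congrFun (congrArg DFunLike.coe (hP.diff m)) v
    simp only [LinearMap.sub_apply, LinearMap.comp_apply, hv, map_zero,
      LinearMap.smul_apply, LinearMap.id_apply, zero_sub] at hdiff
    -- hdiff : -(upMap rank m (downMap rank (m+1) v)) = r • v
    have hkey := key_dot rank m v
    have h1 : dotProduct v (upMap rank m (downMap rank (m + 1) v))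
        = -(r : ℚ) * dotProduct v v := by
      have h2 : upMap rank m (downMap rank (m + 1) v) = -((r : ℚ) • v) := by
        exact neg_eq_iff_eq_neg.mp hdiff
      rw [h2, dotProduct_neg, dotProduct_smul, smul_eq_mul, neg_mul]
    have hDnonneg : 0 ≤ dotProduct (downMap rank (m + 1) v) (downMap rank (m + 1) v) :=
      Finset.sum_nonneg fun i _ => mul_self_nonneg _
    have hvnonneg : 0 ≤ dotProduct v v :=
      Finset.sum_nonneg fun i _ => mul_self_nonneg _
    have : dotProduct v v = 0 := by
      have hr' : (0:ℚ) < r := by exact_mod_cast hP.r_pos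
      nlinarith [hkey, h1, hDnonneg, hvnonneg, hr']
    exact dot_self_eq_zero this
end

section
/- Let P be an r-differential poset. Then for all n ≥ 0 the operator D_{n+1}U_n : ℚP_n → ℚP_n is invertible. -/
open Matrix

/-- Stanley. In an `r`-differential poset, the operator
`D_{n+1} U_n : ℚP_n → ℚP_n` is invertible for every `n ≥ 0`. -/
theorem downMap_comp_upMap_bijective {P : Type*} [PartialOrder P] (rank : P → ℕ)
    [∀ m : ℕ, Fintype {x : P // rank x = m}] (r : ℕ)
    (hP : IsDifferentialPoset rank r) (n : ℕ) :
    Function.Bijective (LinearMap.comp (M₃ := {x : P // rank x = n} → ℚ)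
      (downMap rank (n + 1)) (upMap rank n)) := by
  classical
  have hinj : Function.Injective (LinearMap.comp (M₃ := {x : P // rank x = n} → ℚ)
      (downMap rank (n + 1)) (upMap rank n)) := by
    rw [← LinearMap.ker_eq_bot, LinearMap.ker_eq_bot']
    intro x hx
    match n, x, hx with
    | 0, x, hx =>
      rw [hP.diff_zero] at hx
      have hr : (r : ℚ) ≠ 0 := by exact_mod_cast hP.r_pos.ne'
      simpa [hr] using hx
    | m + 1, x, hx =>
      have hd := hP.diff m
      have heq : LinearMap.comp (M₃ := {x : P // rank x = m + 1} → ℚ)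
          (downMap rank (m + 2)) (upMap rank (m + 1)) =
          upMap rank m ∘ₗ downMap rank (m + 1) + (r : ℚ) • LinearMap.id := by
        rw [← hd]; abel
      rw [heq] at hx
      set M : Matrix {x : P // rank x = m + 1} {x : P // rank x = m} ℚ :=
        fun y x => if (x : P) ⋖ (y : P) then 1 else 0 with hM
      have hx' : M *ᵥ (Mᵀ *ᵥ x) + (r : ℚ) • x = 0 := by
        have h := hx
        simp only [LinearMap.add_apply, LinearMap.comp_apply, LinearMap.smul_apply,
          LinearMap.id_apply] at h
        exact h
      have e : (M *ᵥ (Mᵀ *ᵥ x)) ⬝ᵥ x = (Mᵀ *ᵥ x) ⬝ᵥ (Mᵀ *ᵥ x) := by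
        rw [dotProduct_comm, Matrix.dotProduct_mulVec, ← Matrix.mulVec_transpose]
      have key : (Mᵀ *ᵥ x) ⬝ᵥ (Mᵀ *ᵥ x) + (r : ℚ) * (x ⬝ᵥ x) = 0 := by
        have h := congrArg (fun v => v ⬝ᵥ x) hx'
        simp only [add_dotProduct, smul_dotProduct, zero_dotProduct,
          smul_eq_mul] at h
        rw [← e]
        convert h using 2
      have h1 : 0 ≤ dotProduct (Mᵀ *ᵥ x) (Mᵀ *ᵥ x) :=
        Finset.sum_nonneg fun i _ => mul_self_nonneg _
      have h2 : 0 ≤ dotProduct x x :=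
        Finset.sum_nonneg fun i _ => mul_self_nonneg _
      have hr : (0 : ℚ) < r := by exact_mod_cast hP.r_pos
      have hxx : dotProduct x x = 0 := by nlinarith
      exact dotProduct_self_eq_zero.mp hxx
  exact ⟨hinj, (LinearMap.injective_iff_surjective).mp hinj⟩
end

section
/- Let P be an r-differential poset and n ≥ 1. Then the inverse of D_nU_{n−1} : ℚP_{n−1} → ℚP_{n−1} is given by (D_nU_{n−1})^{-1} = Σ_{k=0}^{n−1} (−1)^k · U^k D^k / (r^{k+1}(k+1)!), where U^k D^k denotes the composite U_{n−2}⋯U_{n−k−1} ∘ D_{n−k}⋯D_{n−1} acting on ℚP_{n−1}. -/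
/-- The operator `U^k D^k : ℚP_n → ℚP_n`, the composite of `k` down operators
(landing in `ℚP_{n-k}`) followed by `k` up operators. (It is `0` if `k > n`.) -/
noncomputable def udIter {P : Type*} [PartialOrder P] (rank : P → ℕ)
    [∀ m : ℕ, Fintype {x : P // rank x = m}] :
    (n k : ℕ) → ({x : P // rank x = n} → ℚ) →ₗ[ℚ] ({x : P // rank x = n} → ℚ)
  | _, 0 => LinearMap.id
  | 0, _ + 1 => 0
  | n + 1, k + 1 => LinearMap.comp (M₃ := {x : P // rank x = n + 1} → ℚ)
      (upMap rank n) (udIter rank n k) ∘ₗ downMap rank (n + 1)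

section AuxLemmas

variable {P : Type*} [PartialOrder P] (rank : P → ℕ)
    [∀ m : ℕ, Fintype {x : P // rank x = m}] {r : ℕ}

theorem udIter_eq_zero_of_lt : ∀ n k : ℕ, n < k → udIter rank n k = 0
  | _, 0, h => absurd h (Nat.not_lt_zero _)
  | 0, _ + 1, _ => rfl
  | n + 1, k + 1, h => by
      have h0 := udIter_eq_zero_of_lt n k (by omega)
      simp only [udIter, h0]
      simp

/-- `A_n ∘ U^k D^k = U^{k+1} D^{k+1} + (k+1) r · U^k D^k` on `ℚP_n`. -/
theorem comp_udIter (hP : IsDifferentialPoset rank r) : ∀ n k : ℕ,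
    (LinearMap.comp (M₃ := {x : P // rank x = n} → ℚ)
        (downMap rank (n + 1)) (upMap rank n)) ∘ₗ udIter rank n k
      = udIter rank n (k + 1) + ((((k : ℚ) + 1)) * r) • udIter rank n k
  | 0, 0 => by
      simp only [udIter, LinearMap.comp_id]
      rw [hP.diff_zero]
      module
  | n + 1, 0 => by
      have h' : LinearMap.comp (M₃ := {x : P // rank x = n + 1} → ℚ)
          (downMap rank (n + 1 + 1)) (upMap rank (n + 1))
          = upMap rank n ∘ₗ downMap rank (n + 1) + (r : ℚ) • LinearMap.id :=
        sub_eq_iff_eq_add'.mp (hP.diff n)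
      simp only [udIter, LinearMap.comp_id]
      rw [h']
      module
  | 0, k + 1 => by
      simp only [udIter]
      simp
  | n + 1, k + 1 => by
      have ih := comp_udIter hP n k
      have h' : LinearMap.comp (M₃ := {x : P // rank x = n + 1} → ℚ)
          (downMap rank (n + 1 + 1)) (upMap rank (n + 1))
          = upMap rank n ∘ₗ downMap rank (n + 1) + (r : ℚ) • LinearMap.id :=
        sub_eq_iff_eq_add'.mp (hP.diff n)
      have hassoc : (upMap rank n ∘ₗ downMap rank (n + 1))
            ∘ₗ ((upMap rank n ∘ₗ udIter rank n k) ∘ₗ downMap rank (n + 1))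
          = (upMap rank n ∘ₗ
              ((LinearMap.comp (M₃ := {x : P // rank x = n} → ℚ)
                (downMap rank (n + 1)) (upMap rank n)) ∘ₗ udIter rank n k))
            ∘ₗ downMap rank (n + 1) := rfl
      simp only [udIter]
      rw [h', LinearMap.add_comp, LinearMap.smul_comp, LinearMap.id_comp, hassoc, ih,
        LinearMap.comp_add, LinearMap.add_comp, LinearMap.comp_smul, LinearMap.smul_comp]
      push_cast
      module

/-- `U^k D^k ∘ A_n = U^{k+1} D^{k+1} + (k+1) r · U^k D^k` on `ℚP_n`. -/
theorem udIter_comp (hP : IsDifferentialPoset rank r) : ∀ n k : ℕ,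
    udIter rank n k ∘ₗ (LinearMap.comp (M₃ := {x : P // rank x = n} → ℚ)
        (downMap rank (n + 1)) (upMap rank n))
      = udIter rank n (k + 1) + ((((k : ℚ) + 1)) * r) • udIter rank n k
  | 0, 0 => by
      simp only [udIter, LinearMap.id_comp]
      rw [hP.diff_zero]
      module
  | n + 1, 0 => by
      have h' : LinearMap.comp (M₃ := {x : P // rank x = n + 1} → ℚ)
          (downMap rank (n + 1 + 1)) (upMap rank (n + 1))
          = upMap rank n ∘ₗ downMap rank (n + 1) + (r : ℚ) • LinearMap.id :=
        sub_eq_iff_eq_add'.mp (hP.diff n)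
      simp only [udIter, LinearMap.id_comp, LinearMap.comp_id]
      rw [h']
      module
  | 0, k + 1 => by
      simp only [udIter]
      simp
  | n + 1, k + 1 => by
      have ih := udIter_comp hP n k
      have h' : LinearMap.comp (M₃ := {x : P // rank x = n + 1} → ℚ)
          (downMap rank (n + 1 + 1)) (upMap rank (n + 1))
          = upMap rank n ∘ₗ downMap rank (n + 1) + (r : ℚ) • LinearMap.id :=
        sub_eq_iff_eq_add'.mp (hP.diff n)
      have hassoc : ((upMap rank n ∘ₗ udIter rank n k) ∘ₗ downMap rank (n + 1))
            ∘ₗ (upMap rank n ∘ₗ downMap rank (n + 1))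
          = (upMap rank n ∘ₗ
              (udIter rank n k ∘ₗ (LinearMap.comp (M₃ := {x : P // rank x = n} → ℚ)
                (downMap rank (n + 1)) (upMap rank n))))
            ∘ₗ downMap rank (n + 1) := rfl
      simp only [udIter]
      rw [h', LinearMap.comp_add, LinearMap.comp_smul, LinearMap.comp_id, hassoc, ih,
        LinearMap.comp_add, LinearMap.add_comp, LinearMap.comp_smul, LinearMap.smul_comp]
      push_cast
      module

theorem my_comp_sum {R M N Q : Type*} [CommSemiring R] [AddCommMonoid M] [AddCommMonoid N]
    [AddCommMonoid Q] [Module R M] [Module R N] [Module R Q] {ι : Type*}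
    (f : N →ₗ[R] Q) (s : Finset ι) (g : ι → (M →ₗ[R] N)) :
    f ∘ₗ (∑ i ∈ s, g i) = ∑ i ∈ s, f ∘ₗ g i := by
  ext x
  simp [LinearMap.sum_apply, map_sum]

theorem my_sum_comp {R M N Q : Type*} [CommSemiring R] [AddCommMonoid M] [AddCommMonoid N]
    [AddCommMonoid Q] [Module R M] [Module R N] [Module R Q] {ι : Type*}
    (f : M →ₗ[R] N) (s : Finset ι) (g : ι → (N →ₗ[R] Q)) :
    (∑ i ∈ s, g i) ∘ₗ f = ∑ i ∈ s, g i ∘ₗ f := by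
  ext x
  simp [LinearMap.sum_apply]

end AuxLemmas

/-- Gaetz–Venkataramana, after Miller. In an `r`-differential poset,
for `n ≥ 1` the inverse of `D_n U_{n-1} : ℚP_{n-1} → ℚP_{n-1}` is
`Σ_{k=0}^{n-1} (-1)^k U^k D^k / (r^{k+1} (k+1)!)`.  (Stated here with `n` replaced by
`n + 1`: the displayed sum over `k = 0, …, n` is a two-sided inverse of
`D_{n+1} U_n : ℚP_n → ℚP_n`.) -/
theorem downMap_upMap_inverse_formula {P : Type*} [PartialOrder P] (rank : P → ℕ)
    [∀ m : ℕ, Fintype {x : P // rank x = m}] (r : ℕ)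
    (hP : IsDifferentialPoset rank r) (n : ℕ) :
    (∑ k ∈ Finset.range (n + 1),
        ((-1 : ℚ) ^ k / ((r : ℚ) ^ (k + 1) * ((k + 1).factorial : ℚ))) • udIter rank n k)
      ∘ₗ LinearMap.comp (M₃ := {x : P // rank x = n} → ℚ)
        (downMap rank (n + 1)) (upMap rank n) = LinearMap.id ∧
    LinearMap.comp (M₃ := {x : P // rank x = n} → ℚ)
        (downMap rank (n + 1)) (upMap rank n)
      ∘ₗ (∑ k ∈ Finset.range (n + 1),
        ((-1 : ℚ) ^ k / ((r : ℚ) ^ (k + 1) * ((k + 1).factorial : ℚ))) • udIter rank n k)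
      = LinearMap.id := by
  have hr : (r : ℚ) ≠ 0 := Nat.cast_ne_zero.mpr hP.r_pos.ne'
  set g : ℕ → ({x : P // rank x = n} → ℚ) →ₗ[ℚ] ({x : P // rank x = n} → ℚ) :=
    fun k => ((-1 : ℚ) ^ k / ((r : ℚ) ^ k * (k.factorial : ℚ))) • udIter rank n k with hg
  have key : ∀ k : ℕ, ((-1 : ℚ) ^ k / ((r : ℚ) ^ (k + 1) * (((k + 1).factorial : ℕ) : ℚ))) •
      (udIter rank n (k + 1) + (((k : ℚ) + 1) * r) • udIter rank n k) = g k - g (k + 1) := by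
    intro k
    have hk : ((k : ℚ) + 1) ≠ 0 := by positivity
    have hf : ((k.factorial : ℕ) : ℚ) ≠ 0 := by exact_mod_cast k.factorial_ne_zero
    simp only [hg, Nat.factorial_succ]
    push_cast
    match_scalars
    · field_simp
      ring
    · field_simp
      ring
  have hsum : ∑ k ∈ Finset.range (n + 1),
      ((-1 : ℚ) ^ k / ((r : ℚ) ^ (k + 1) * ((k + 1).factorial : ℚ))) •
        (udIter rank n (k + 1) + (((k : ℚ) + 1) * r) • udIter rank n k) = LinearMap.id := by
    rw [Finset.sum_congr rfl (fun k _ => key k), Finset.sum_range_sub' g (n + 1)]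
    have h1 : g (n + 1) = 0 := by
      simp [hg, udIter_eq_zero_of_lt rank n (n + 1) (Nat.lt_succ_self n)]
    have h0 : g 0 = LinearMap.id := by
      simp [hg, udIter]
    rw [h0, h1, sub_zero]
  constructor
  · rw [my_sum_comp]
    simp only [LinearMap.smul_comp, udIter_comp rank hP n]
    exact hsum
  · rw [my_comp_sum]
    simp only [LinearMap.comp_smul, comp_udIter rank hP n]
    exact hsum
end

section
/- Let P be an r-differential poset, n ≥ 1, and let M_n = U_{n−1}(D_nU_{n−1})^{-1}D_n : ℚP_n → ℚP_n. Then in the standard basis P_n of ℚP_n, the matrix entries m_{xy} = ⟨M_n y, x⟩ of M_n are given by m_{xy} = Σ_{k=1}^{n} (−1)^{k−1} · ⟨D^k x, D^k y⟩ / (r^k · k!) for all x, y ∈ P_n. -/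
/-- The inner product on `ℚP_n` (realized as `P_n → ℚ`) making the elements of `P_n`
an orthonormal basis. -/
noncomputable def innerQ {α : Type*} [Fintype α] (f g : α → ℚ) : ℚ := ∑ a, f a * g a

/-- The `k`-fold composite of down operators `D^k : ℚP_n → ℚP_{n-k}`. -/
noncomputable def downIter {P : Type*} [PartialOrder P] (rank : P → ℕ)
    [∀ m : ℕ, Fintype {x : P // rank x = m}] (n : ℕ) :
    (k : ℕ) → ({x : P // rank x = n} → ℚ) →ₗ[ℚ] ({x : P // rank x = n - k} → ℚ)
  | 0 => LinearMap.id
  | k + 1 => downMap rank (n - k) ∘ₗ downIter rank n k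

open Finset

section Commutator

variable {K A : Type*} [CommSemiring K] [Semiring A] [Algebra K A] {D U : A} {r : K}

theorem pow_succ_mul_of_mul_eq (hDU : D * U = U * D + r • 1) (k : ℕ) :
    D ^ (k + 1) * U = U * D ^ (k + 1) + ((k + 1 : K) * r) • D ^ k := by
  induction k with
  | zero => simpa using hDU
  | succ k ih =>
    calc D ^ (k + 2) * U = D ^ (k + 1) * (D * U) := by rw [pow_succ, mul_assoc]
      _ = (D ^ (k + 1) * U) * D + r • D ^ (k + 1) := by
        rw [hDU, mul_add, mul_smul_comm, mul_one, mul_assoc]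
      _ = U * D ^ (k + 1 + 1) + (((k + 1 : ℕ) + 1 : K) * r) • D ^ (k + 1) := by
        rw [ih, add_mul, smul_mul_assoc, mul_assoc, ← pow_succ, ← pow_succ, add_assoc,
          ← add_smul]
        congr 2
        push_cast
        ring

end Commutator

section Expansion

variable {K V : Type*} [Field K] [CharZero K] [AddCommGroup V] [Module K V]
  {D U : Module.End K V} {r : K}

theorem apply_eq_sum_of_mul_eq (hr : r ≠ 0) (hDU : D * U = U * D + r • 1) {N : ℕ} {w v : V}
    (hw : (D ^ (N + 1)) w = 0) (hv : D (U w) = D v) :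
    U w = ∑ k ∈ Icc 1 (N + 1),
      ((-1) ^ (k - 1) / (r ^ k * k.factorial)) • (U ^ k) ((D ^ k) v) := by
  -- the `k`-th summand is `a (k - 1) - a k`
  set a : ℕ → V := fun j ↦ ((-1) ^ j / (r ^ j * j.factorial)) • (U ^ (j + 1)) ((D ^ j) w)
  have hpow : ∀ k, (D ^ (k + 1)) (U w) = (D ^ (k + 1)) v := fun k ↦ by
    rw [pow_succ, Module.End.mul_apply, hv, ← Module.End.mul_apply, ← pow_succ]
  have hstep : ∀ j, ((-1) ^ j / (r ^ (j + 1) * (j + 1).factorial)) •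
      (U ^ (j + 1)) ((D ^ (j + 1)) v) = a j - a (j + 1) := fun j ↦ by
    have hc := congr($(pow_succ_mul_of_mul_eq hDU j) w)
    simp only [Module.End.mul_apply, LinearMap.add_apply, LinearMap.smul_apply] at hc
    rw [← hpow, hc, map_add, map_smul, ← Module.End.mul_apply, ← pow_succ, smul_add,
      smul_smul, add_comm, sub_eq_add_neg, ← neg_smul]
    congr 2 <;> · push_cast [Nat.factorial_succ]; field_simp; ring
  calc U w = a 0 - a (N + 1) := by simp [a, hw]
    _ = ∑ j ∈ range (N + 1), (a j - a (j + 1)) := (sum_range_sub' a _).symm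
    _ = _ := by
      rw [← Ico_add_one_right_eq_Icc, sum_Ico_eq_sum_range, Nat.add_sub_cancel]
      refine sum_congr rfl fun j _ ↦ ?_
      rw [add_comm 1 j, Nat.add_sub_cancel, hstep]

end Expansion

section Pairing

variable {P : Type*}

-- `ℚP = ⨁ ℚP_m` is modelled as `P →₀ ℚ`; this is its standard inner product.
variable (P) in
noncomputable def finsuppPairing : (P →₀ ℚ) →ₗ[ℚ] (P →₀ ℚ) →ₗ[ℚ] ℚ :=
  Finsupp.lsum ℚ fun a ↦ (LinearMap.mul ℚ ℚ).compl₂ (Finsupp.lapply a)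

theorem finsuppPairing_single_left (a : P) (c : ℚ) (q : P →₀ ℚ) :
    finsuppPairing P (Finsupp.single a c) q = c * q a := by
  simp [finsuppPairing]

theorem finsuppPairing_single_right (p : P →₀ ℚ) (a : P) (c : ℚ) :
    finsuppPairing P p (Finsupp.single a c) = p a * c := by
  induction p using Finsupp.induction_linear with
  | zero => simp
  | add p q hp hq => simp [hp, hq, add_mul]
  | single b d => rw [finsuppPairing_single_left]; by_cases h : a = b <;> simp [h, mul_comm]

variable (rank : P → ℕ) [∀ m : ℕ, Fintype {x : P // rank x = m}]

noncomputable def rankInclusion (m : ℕ) : ({x : P // rank x = m} → ℚ) →ₗ[ℚ] (P →₀ ℚ) :=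
  Finsupp.lmapDomain ℚ ℚ Subtype.val ∘ₗ
    (Finsupp.linearEquivFunOnFinite ℚ ℚ _).symm.toLinearMap

variable {rank}

theorem rankInclusion_apply (m : ℕ) (f : {x : P // rank x = m} → ℚ) (p : P) :
    rankInclusion rank m f p = if h : rank p = m then f ⟨p, h⟩ else 0 := by
  split_ifs with h
  · exact Finsupp.mapDomain_apply Subtype.val_injective _ ⟨p, h⟩
  · exact Finsupp.mapDomain_of_notMem_range _ _ (by simpa using h)

theorem rankInclusion_single [DecidableEq P] (m : ℕ) (a : {x : P // rank x = m}) (c : ℚ) :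
    rankInclusion rank m (Pi.single a c) = Finsupp.single (a : P) c := by
  simp [rankInclusion, Finsupp.linearEquivFunOnFinite_symm_single]

theorem finsuppPairing_rankInclusion [DecidableEq P] (m : ℕ)
    (f g : {x : P // rank x = m} → ℚ) :
    finsuppPairing P (rankInclusion rank m f) (rankInclusion rank m g) = innerQ f g := by
  conv_lhs => rw [← Finset.univ_sum_single f]
  simp [rankInclusion_single, finsuppPairing_single_left, rankInclusion_apply, innerQ]
  exact sum_congr rfl fun a _ ↦ if_pos a.2

end Pairing

section Operators

variable {P : Type*} [PartialOrder P] [DecidableEq P] (rank : P → ℕ)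
  [∀ m : ℕ, Fintype {x : P // rank x = m}]

noncomputable def globalDown : Module.End ℚ (P →₀ ℚ) :=
  Finsupp.linearCombination ℚ fun x ↦
    rankInclusion rank (rank x - 1) (downMap rank (rank x) (Pi.single ⟨x, rfl⟩ 1))

noncomputable def globalUp : Module.End ℚ (P →₀ ℚ) :=
  Finsupp.linearCombination ℚ fun x ↦
    rankInclusion rank (rank x + 1) (upMap rank (rank x) (Pi.single ⟨x, rfl⟩ 1))

variable {rank}

theorem globalDown_rankInclusion (m : ℕ) (f : {x : P // rank x = m} → ℚ) :
    globalDown rank (rankInclusion rank m f) = rankInclusion rank (m - 1) (downMap rank m f) := by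
  suffices
      globalDown rank ∘ₗ rankInclusion rank m = rankInclusion rank (m - 1) ∘ₗ downMap rank m from
    congr($this f)
  refine LinearMap.pi_ext fun ⟨a, ha⟩ c ↦ ?_
  subst ha
  simp only [LinearMap.comp_apply, rankInclusion_single, globalDown,
    Finsupp.linearCombination_single]
  rw [← map_smul, ← map_smul, ← Pi.single_smul', smul_eq_mul, mul_one]

theorem globalUp_rankInclusion (m : ℕ) (f : {x : P // rank x = m} → ℚ) :
    globalUp rank (rankInclusion rank m f) = rankInclusion rank (m + 1) (upMap rank m f) := by
  suffices
      globalUp rank ∘ₗ rankInclusion rank m = rankInclusion rank (m + 1) ∘ₗ upMap rank m from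
    congr($this f)
  refine LinearMap.pi_ext fun ⟨a, ha⟩ c ↦ ?_
  subst ha
  simp only [LinearMap.comp_apply, rankInclusion_single, globalUp,
    Finsupp.linearCombination_single]
  rw [← map_smul, ← map_smul, ← Pi.single_smul', smul_eq_mul, mul_one]

theorem globalDown_pow_rankInclusion (m k : ℕ) (f : {x : P // rank x = m} → ℚ) :
    (globalDown rank ^ k) (rankInclusion rank m f)
      = rankInclusion rank (m - k) (downIter rank m k f) := by
  induction k with
  | zero => rfl
  | succ k ih => rw [pow_succ', Module.End.mul_apply, ih, globalDown_rankInclusion]; rfl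

open Classical in
theorem upMap_single_one_apply (m : ℕ) (x : {v : P // rank v = m})
    (y : {v : P // rank v = m + 1}) :
    upMap rank m (Pi.single x 1) y = if (x : P) ⋖ y then 1 else 0 := by
  rw [upMap]
  erw [Matrix.mulVecLin_apply, Matrix.mulVec_single_one]
  rfl

open Classical in
theorem downMap_single_one_apply (m : ℕ) (x : {v : P // rank v = m})
    (y : {v : P // rank v = m - 1}) :
    downMap rank m (Pi.single x 1) y = if (y : P) ⋖ x then 1 else 0 := by
  rw [downMap]
  erw [Matrix.mulVecLin_apply, Matrix.mulVec_single_one]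
  rfl

open Classical in
theorem globalUp_single_apply (hrank : ∀ x y : P, x ⋖ y → rank y = rank x + 1) (x y : P)
    (c : ℚ) :
    globalUp rank (Finsupp.single x c) y = if x ⋖ y then c else 0 := by
  simp only [globalUp, Finsupp.linearCombination_single, Finsupp.smul_apply, rankInclusion_apply]
  split_ifs with h hxy hxy <;> simp_all [upMap_single_one_apply]
  exact (h (hrank x y hxy)).elim

open Classical in
theorem globalDown_single_apply (hrank : ∀ x y : P, x ⋖ y → rank y = rank x + 1) (x y : P)
    (c : ℚ) :
    globalDown rank (Finsupp.single y c) x = if x ⋖ y then c else 0 := by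
  simp only [globalDown, Finsupp.linearCombination_single, Finsupp.smul_apply,
    rankInclusion_apply]
  split_ifs with h hxy hxy <;> simp_all [downMap_single_one_apply]
  have := hrank x y hxy
  omega

theorem finsuppPairing_globalUp (hrank : ∀ x y : P, x ⋖ y → rank y = rank x + 1)
    (p q : P →₀ ℚ) :
    finsuppPairing P p (globalUp rank q) = finsuppPairing P (globalDown rank p) q := by
  suffices
      (finsuppPairing P).compl₂ (globalUp rank) = finsuppPairing P ∘ₗ globalDown rank from
    congr($this p q)
  refine Finsupp.lhom_ext fun a b ↦ Finsupp.lhom_ext fun x c ↦ ?_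
  simp only [LinearMap.compl₂_apply, LinearMap.comp_apply, finsuppPairing_single_left,
    finsuppPairing_single_right, globalUp_single_apply hrank, globalDown_single_apply hrank]
  split_ifs <;> ring

theorem finsuppPairing_globalUp_pow (hrank : ∀ x y : P, x ⋖ y → rank y = rank x + 1) (k : ℕ)
    (p q : P →₀ ℚ) :
    finsuppPairing P p ((globalUp rank ^ k) q) = finsuppPairing P ((globalDown rank ^ k) p) q := by
  induction k generalizing p with
  | zero => rfl
  | succ k ih =>
    rw [pow_succ', Module.End.mul_apply, finsuppPairing_globalUp hrank, ih,
      ← Module.End.mul_apply, ← pow_succ]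

theorem globalUp_pow_globalDown_pow_single_apply (hrank : ∀ x y : P, x ⋖ y → rank y = rank x + 1)
    (m k : ℕ) (x y : {v : P // rank v = m}) :
    (globalUp rank ^ k) ((globalDown rank ^ k) (Finsupp.single (y : P) 1)) x
      = innerQ (downIter rank m k (Pi.single x 1)) (downIter rank m k (Pi.single y 1)) := by
  calc _ = finsuppPairing P (Finsupp.single (x : P) 1)
        ((globalUp rank ^ k) ((globalDown rank ^ k) (Finsupp.single (y : P) 1))) := by
        rw [finsuppPairing_single_left, one_mul]
    _ = _ := by
      rw [finsuppPairing_globalUp_pow hrank, ← rankInclusion_single, ← rankInclusion_single,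
        globalDown_pow_rankInclusion, globalDown_pow_rankInclusion, finsuppPairing_rankInclusion]

theorem globalDown_rankInclusion_zero (hrank : ∀ x y : P, x ⋖ y → rank y = rank x + 1)
    (f : {x : P // rank x = 0} → ℚ) :
    globalDown rank (rankInclusion rank 0 f) = 0 := by
  suffices globalDown rank ∘ₗ rankInclusion rank 0 = 0 from congr($this f)
  refine LinearMap.pi_ext fun a c ↦ Finsupp.ext fun p ↦ ?_
  have : ¬ p ⋖ a := fun h ↦ by have := hrank _ _ h; have := a.2; omega
  simp [rankInclusion_single, globalDown_single_apply hrank, this]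

theorem globalDown_pow_succ_rankInclusion (hrank : ∀ x y : P, x ⋖ y → rank y = rank x + 1)
    (m : ℕ) (f : {x : P // rank x = m} → ℚ) :
    (globalDown rank ^ (m + 1)) (rankInclusion rank m f) = 0 := by
  induction m with
  | zero => simpa using globalDown_rankInclusion_zero hrank f
  | succ m ih => rw [pow_succ, Module.End.mul_apply, globalDown_rankInclusion]; exact ih _

theorem globalDown_mul_globalUp {r : ℕ} (hP : IsDifferentialPoset rank r) :
    globalDown rank * globalUp rank = globalUp rank * globalDown rank + (r : ℚ) • 1 := by
  have hgraded : ∀ m (f : {x : P // rank x = m} → ℚ),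
      globalDown rank (globalUp rank (rankInclusion rank m f))
        = globalUp rank (globalDown rank (rankInclusion rank m f))
          + (r : ℚ) • rankInclusion rank m f := by
    rintro (_ | m) f
    · rw [globalDown_rankInclusion_zero hP.rank_covBy, map_zero, zero_add, globalUp_rankInclusion,
        globalDown_rankInclusion, ← map_smul]
      exact congr(rankInclusion rank 0 ($hP.diff_zero f))
    · rw [globalUp_rankInclusion, globalDown_rankInclusion, globalDown_rankInclusion,
        globalUp_rankInclusion, ← map_smul]
      have h : downMap rank (m + 2) (upMap rank (m + 1) f)
          = upMap rank m (downMap rank (m + 1) f) + (r : ℚ) • f :=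
        eq_add_of_sub_eq' congr($(hP.diff m) f)
      exact congr(rankInclusion rank (m + 1) $h).trans (map_add _ _ _)
  refine Finsupp.lhom_ext fun x c ↦ ?_
  simpa [rankInclusion_single] using hgraded (rank x) (Pi.single ⟨x, rfl⟩ c)

end Operators

/-- Gaetz–Venkataramana, Proposition 2.3(b). Let `P` be an
`r`-differential poset, `n ≥ 1`, and `M_n = U_{n-1} (D_n U_{n-1})⁻¹ D_n : ℚP_n → ℚP_n`.
In the standard basis `P_n`, the matrix entries `m_{xy} = ⟨M_n y, x⟩` are
`m_{xy} = Σ_{k=1}^{n} (-1)^{k-1} ⟨D^k x, D^k y⟩ / (r^k · k!)`.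
(Stated with `n` replaced by `n + 1`; the inverse of `D_{n+1} U_n` is presented as a
two-sided inverse `R`, and `⟨M y, x⟩` is the coordinate of `M(𝟙_y)` at `x`.) -/
theorem projection_matrix_entries {P : Type*} [PartialOrder P] [DecidableEq P]
    (rank : P → ℕ) [∀ m : ℕ, Fintype {x : P // rank x = m}] (r : ℕ)
    (hP : IsDifferentialPoset rank r) (n : ℕ)
    (R : ({x : P // rank x = n} → ℚ) →ₗ[ℚ] ({x : P // rank x = n} → ℚ))
    (hR₁ : R ∘ₗ LinearMap.comp (M₃ := {x : P // rank x = n} → ℚ)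
      (downMap rank (n + 1)) (upMap rank n) = LinearMap.id)
    (hR₂ : LinearMap.comp (M₃ := {x : P // rank x = n} → ℚ)
      (downMap rank (n + 1)) (upMap rank n) ∘ₗ R = LinearMap.id)
    (x y : {v : P // rank v = n + 1}) :
    (upMap rank n ∘ₗ R ∘ₗ downMap rank (n + 1)) (Pi.single y 1) x
      = ∑ k ∈ Finset.Icc 1 (n + 1), (-1 : ℚ) ^ (k - 1) *
          innerQ (downIter rank (n + 1) k (Pi.single x 1))
            (downIter rank (n + 1) k (Pi.single y 1)) /
          ((r : ℚ) ^ k * (k.factorial : ℚ)) := by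
  have hr : (r : ℚ) ≠ 0 := Nat.cast_ne_zero.mpr hP.r_pos.ne'
  set w := R (downMap rank (n + 1) (Pi.single y 1))
  have hw : downMap rank (n + 1) (upMap rank n w) = downMap rank (n + 1) (Pi.single y 1) :=
    congr($hR₂ (downMap rank (n + 1) (Pi.single y 1)))
  have hexp := apply_eq_sum_of_mul_eq hr (globalDown_mul_globalUp hP)
    (globalDown_pow_succ_rankInclusion hP.rank_covBy n w) (v := Finsupp.single (y : P) 1)
    (by rw [globalUp_rankInclusion, globalDown_rankInclusion, hw, ← globalDown_rankInclusion,
      rankInclusion_single])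
  calc (upMap rank n ∘ₗ R ∘ₗ downMap rank (n + 1)) (Pi.single y 1) x
      = globalUp rank (rankInclusion rank n w) x := by
        rw [globalUp_rankInclusion, rankInclusion_apply, dif_pos x.2]; rfl
    _ = _ := by
      rw [hexp, Finsupp.finsetSum_apply]
      refine sum_congr rfl fun k _ ↦ ?_
      rw [Finsupp.smul_apply, globalUp_pow_globalDown_pow_single_apply hP.rank_covBy,
        smul_eq_mul, div_mul_eq_mul_div]
end

section
/- Let P be an r-differential poset, n ≥ 1, and let M_n = U_{n−1}(D_nU_{n−1})^{-1}D_n : ℚP_n → ℚP_n with matrix entries m_{xy} in the standard basis P_n. Let S ⊆ P_n and let M_S be the principal submatrix of M_n with rows and columns indexed by S. If M_S does not have 1 as an eigenvalue, then Δp_n ≥ |S|. -/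
open Module End Matrix

section

variable {K ι : Type*} [Field K] [Fintype ι] [DecidableEq ι]

theorem linearIndependent_single_sub_of_not_hasEigenvalue_one (M : (ι → K) →ₗ[K] (ι → K))
    (S : Finset ι)
    (hS : ¬ HasEigenvalue ((LinearMap.toMatrix' M).submatrix ((↑) : S → ι) (↑)).mulVecLin 1) :
    LinearIndependent K fun s : S => Pi.single (s : ι) (1 : K) - M (Pi.single s 1) := by
  rw [Fintype.linearIndependent_iff]
  intro c hc
  set x : ι → K := ∑ s : S, c s • Pi.single (s : ι) 1 with hx
  have hx_apply (a : S) : x a = c a := by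
    simp [hx, Finset.sum_apply, Pi.single_apply]
  have hMx : M x = x := by
    simp only [smul_sub, Finset.sum_sub_distrib, ← map_smul, ← map_sum, sub_eq_zero] at hc
    exact hc.symm
  have hc_eigen :
      c ∈ eigenspace ((LinearMap.toMatrix' M).submatrix ((↑) : S → ι) (↑)).mulVecLin 1 := by
    rw [mem_eigenspace_iff, one_smul, mulVecLin_apply]
    funext a
    calc ((LinearMap.toMatrix' M).submatrix ((↑) : S → ι) (↑) *ᵥ c) a
        = M x a := by simp [hx, mulVec, dotProduct, map_sum, mul_comm]
      _ = c a := by rw [hMx, hx_apply]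
  rw [hasEigenvalue_iff, not_not] at hS
  rw [hS] at hc_eigen
  exact congrFun ((Submodule.mem_bot K).mp hc_eigen)

variable {κ : Type*} [Fintype κ]

theorem card_add_card_le_of_not_hasEigenvalue_one (D : (ι → K) →ₗ[K] (κ → K))
    (E : (κ → K) →ₗ[K] (ι → K)) (hDE : D ∘ₗ E = LinearMap.id) (S : Finset ι)
    (hS : ¬ HasEigenvalue
      ((LinearMap.toMatrix' (E ∘ₗ D)).submatrix ((↑) : S → ι) (↑)).mulVecLin 1) :
    Fintype.card κ + S.card ≤ Fintype.card ι := by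
  have hD : Function.Surjective D := fun w => ⟨E w, LinearMap.congr_fun hDE w⟩
  have h_rank_nullity := D.finrank_range_add_finrank_ker
  rw [LinearMap.range_eq_top.mpr hD, finrank_top, finrank_fintype_fun_eq_card,
    finrank_fintype_fun_eq_card] at h_rank_nullity
  have h_span_le : Submodule.span K (Set.range fun s : S =>
      Pi.single (s : ι) (1 : K) - (E ∘ₗ D) (Pi.single s 1)) ≤ LinearMap.ker D := by
    rw [Submodule.span_le]
    rintro _ ⟨s, rfl⟩
    simp [← LinearMap.comp_apply D E, hDE]
  have h_card_le := Submodule.finrank_mono h_span_le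
  rw [finrank_span_eq_card (linearIndependent_single_sub_of_not_hasEigenvalue_one _ S hS),
    Fintype.card_coe] at h_card_le
  omega

end

/-- Indexed with `n + 1` in place of the paper's `n`; `(D_{n+1} U_n)⁻¹` is given as a two-sided
inverse `R`. -/
theorem rank_gap_of_submatrix_no_eigenvalue_one {P : Type*} [PartialOrder P]
    [DecidableEq P] (rank : P → ℕ) [∀ m : ℕ, Fintype {x : P // rank x = m}] (r : ℕ)
    (hP : IsDifferentialPoset rank r) (n : ℕ)
    (R : ({x : P // rank x = n} → ℚ) →ₗ[ℚ] ({x : P // rank x = n} → ℚ))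
    (hR₁ : R ∘ₗ LinearMap.comp (M₃ := {x : P // rank x = n} → ℚ)
      (downMap rank (n + 1)) (upMap rank n) = LinearMap.id)
    (hR₂ : LinearMap.comp (M₃ := {x : P // rank x = n} → ℚ)
      (downMap rank (n + 1)) (upMap rank n) ∘ₗ R = LinearMap.id)
    (S : Finset {v : P // rank v = n + 1})
    (hS : ¬ Module.End.HasEigenvalue
      (Matrix.mulVecLin (fun a b : S =>
        (upMap rank n ∘ₗ R ∘ₗ downMap rank (n + 1))
          (Pi.single (b : {v : P // rank v = n + 1}) 1) a)) 1) :
    Fintype.card {v : P // rank v = n} + S.card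
      ≤ Fintype.card {v : P // rank v = n + 1} :=
  card_add_card_le_of_not_hasEigenvalue_one (downMap rank (n + 1)) (upMap rank n ∘ₗ R) hR₂ S hS
end

section
/- Let P be an r-differential poset and let t_0 ∈ P be a thread element. Then there exists an infinite sequence t_0 ⋖ t_1 ⋖ t_2 ⋖ ⋯ in P in which every t_i is a thread element and t_{i+1} covers t_i for each i ≥ 0. -/
/-- An element of a graded poset is a *singleton* if it has rank `0` (i.e. it is `0̂`)
or it covers exactly one element. -/
def IsSingletonElem {P : Type*} [PartialOrder P] (rank : P → ℕ) (x : P) : Prop :=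
  rank x = 0 ∨ ∃! z : P, z ⋖ x

/-- A *thread element* is a singleton which covers another singleton. -/
def IsThreadElem {P : Type*} [PartialOrder P] (rank : P → ℕ) (x : P) : Prop :=
  IsSingletonElem rank x ∧ ∃ z : P, z ⋖ x ∧ IsSingletonElem rank z

section Counting

open Classical Finset

variable {P : Type*} [PartialOrder P] (rank : P → ℕ) [∀ m : ℕ, Fintype {x : P // rank x = m}]

noncomputable def commonUpCovers (n : ℕ) (x x' : P) : Finset {p : P // rank p = n} :=
  {y | x ⋖ y.1 ∧ x' ⋖ y.1}

noncomputable def commonDownCovers (n : ℕ) (x x' : P) : Finset {p : P // rank p = n} :=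
  {z | z.1 ⋖ x ∧ z.1 ⋖ x'}

theorem upMap_single (n : ℕ) (x : {p : P // rank p = n}) :
    upMap rank n (Pi.single x 1) = fun y => if x.1 ⋖ y.1 then 1 else 0 :=
  Matrix.mulVec_single_one _ x

theorem downMap_single (n : ℕ) (x : {p : P // rank p = n}) :
    downMap rank n (Pi.single x 1) = fun z => if z.1 ⋖ x.1 then 1 else 0 :=
  Matrix.mulVec_single_one _ x

theorem downMap_comp_upMap_single_apply (n : ℕ) (x x' : {p : P // rank p = n}) :
    (downMap rank (n + 1) ∘ₗ upMap rank n) (Pi.single x' 1) x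
      = #(commonUpCovers rank (n + 1) x.1 x'.1) := by
  rw [LinearMap.comp_apply, upMap_single, commonUpCovers, natCast_card_filter]
  change ∑ y : {p : P // rank p = n + 1},
    (if x.1 ⋖ y.1 then (1 : ℚ) else 0) * (if x'.1 ⋖ y.1 then 1 else 0) = _
  simp only [ite_zero_mul_ite_zero, mul_one]

theorem upMap_comp_downMap_single_apply (n : ℕ) (x x' : {p : P // rank p = n + 1}) :
    (upMap rank n ∘ₗ downMap rank (n + 1)) (Pi.single x' 1) x
      = #(commonDownCovers rank n x.1 x'.1) := by
  rw [LinearMap.comp_apply, downMap_single, commonDownCovers, natCast_card_filter]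
  change ∑ z : {p : P // rank p = n},
    (if z.1 ⋖ x.1 then (1 : ℚ) else 0) * (if z.1 ⋖ x'.1 then 1 else 0) = _
  simp only [ite_zero_mul_ite_zero, mul_one]

variable {rank}

@[simp]
theorem mem_commonUpCovers {n : ℕ} {x x' : P} {y : {p : P // rank p = n}} :
    y ∈ commonUpCovers rank n x x' ↔ x ⋖ y.1 ∧ x' ⋖ y.1 := by
  simp [commonUpCovers]

@[simp]
theorem mem_commonDownCovers {n : ℕ} {x x' : P} {z : {p : P // rank p = n}} :
    z ∈ commonDownCovers rank n x x' ↔ z.1 ⋖ x ∧ z.1 ⋖ x' := by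
  simp [commonDownCovers]

theorem card_commonDownCovers_le_one {n : ℕ} {x z : P} (hu : ∀ w, w ⋖ x → w = z) (x' : P) :
    #(commonDownCovers rank n x x') ≤ 1 :=
  card_le_one.2 fun a ha b hb =>
    Subtype.ext <| (hu a.1 (mem_commonDownCovers.1 ha).1).trans
      (hu b.1 (mem_commonDownCovers.1 hb).1).symm

theorem card_commonDownCovers_self {n : ℕ} {x z : P} (hz : rank z = n) (hzx : z ⋖ x)
    (hu : ∀ w, w ⋖ x → w = z) : #(commonDownCovers rank n x x) = 1 := by
  refine le_antisymm (card_commonDownCovers_le_one hu x) (one_le_card.2 ⟨⟨z, hz⟩, ?_⟩)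
  simp [hzx]

end Counting

namespace IsDifferentialPoset

open Classical Finset

variable {P : Type*} [PartialOrder P] {rank : P → ℕ} [∀ m : ℕ, Fintype {x : P // rank x = m}]
  {r : ℕ}

theorem card_commonUpCovers (hP : IsDifferentialPoset rank r) {n : ℕ} {x x' : P}
    (hx : rank x = n + 1) (hx' : rank x' = n + 1) :
    #(commonUpCovers rank (n + 2) x x') =
      #(commonDownCovers rank n x x') + if x = x' then r else 0 := by
  have h := congr($(hP.diff n) (Pi.single ⟨x', hx'⟩ 1) ⟨x, hx⟩)
  rw [LinearMap.sub_apply, Pi.sub_apply, downMap_comp_upMap_single_apply,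
    upMap_comp_downMap_single_apply] at h
  simp only [LinearMap.smul_apply, LinearMap.id_apply, Pi.smul_apply, Pi.single_apply,
    Subtype.mk.injEq, smul_eq_mul, mul_ite, mul_one, mul_zero, sub_eq_iff_eq_add'] at h
  split_ifs at h ⊢ <;> exact_mod_cast h

theorem card_commonUpCovers_self_of_rank_eq_zero (hP : IsDifferentialPoset rank r) {z : P}
    (hz : rank z = 0) :
    #(commonUpCovers rank 1 z z) = r := by
  have h := congr($(hP.diff_zero) (Pi.single ⟨z, hz⟩ 1) ⟨z, hz⟩)
  rw [downMap_comp_upMap_single_apply] at h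
  simpa using h

theorem card_commonUpCovers_self_of_covBy_unique (hP : IsDifferentialPoset rank r) {x z : P}
    (hzx : z ⋖ x) (hu : ∀ w, w ⋖ x → w = z) :
    #(commonUpCovers rank (rank z + 2) x x) = r + 1 := by
  have hx := hP.rank_covBy z x hzx
  rw [hP.card_commonUpCovers hx hx, card_commonDownCovers_self rfl hzx hu, if_pos rfl, add_comm]

theorem card_commonUpCovers_self_le_of_isSingletonElem (hP : IsDifferentialPoset rank r)
    {z : P} (hz : IsSingletonElem rank z) : #(commonUpCovers rank (rank z + 1) z z) ≤ r + 1 := by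
  rcases hz with hz | ⟨w, hwz, hu⟩
  · rw [hz, hP.card_commonUpCovers_self_of_rank_eq_zero hz]
    omega
  · have hz := hP.rank_covBy w z hwz
    rw [hz, hP.card_commonUpCovers_self_of_covBy_unique hwz hu]

theorem card_commonUpCovers_eq_card_commonDownCovers (hP : IsDifferentialPoset rank r) {n : ℕ}
    {x x' : P} (hx : rank x = n + 1) (hx' : rank x' = n + 1) (hne : x ≠ x') :
    #(commonUpCovers rank (n + 2) x x') = #(commonDownCovers rank n x x') := by
  rw [hP.card_commonUpCovers hx hx', if_neg hne, add_zero]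

theorem exists_covBy_covBy_of_covBy_covBy (hP : IsDifferentialPoset rank r) {n : ℕ}
    {x w y : P} (hx : rank x = n + 1) (hne : x ≠ w) (hxy : x ⋖ y) (hwy : w ⋖ y) :
    ∃ v, v ⋖ x ∧ v ⋖ w := by
  have hy : rank y = n + 2 := by rw [hP.rank_covBy x y hxy, hx]
  have hw : rank w = n + 1 := by have := hP.rank_covBy w y hwy; omega
  have hcommon : (commonUpCovers rank (n + 2) x w).Nonempty := ⟨⟨y, hy⟩, by simp [hxy, hwy]⟩
  rw [← card_pos, hP.card_commonUpCovers_eq_card_commonDownCovers hx hw hne, card_pos] at hcommon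
  obtain ⟨v, hv⟩ := hcommon
  exact ⟨v.1, mem_commonDownCovers.1 hv⟩

theorem card_commonUpCovers_le_one (hP : IsDifferentialPoset rank r) {n : ℕ} {x w z : P}
    (hx : rank x = n + 1) (hw : rank w = n + 1) (hne : x ≠ w) (hu : ∀ v, v ⋖ x → v = z) :
    #(commonUpCovers rank (n + 2) x w) ≤ 1 := by
  rw [hP.card_commonUpCovers_eq_card_commonDownCovers hx hw hne]
  exact card_commonDownCovers_le_one hu w

theorem exists_covBy_forall_covBy_eq (hP : IsDifferentialPoset rank r) {x : P}
    (hx : IsThreadElem rank x) : ∃ y, x ⋖ y ∧ ∀ w, w ⋖ y → w = x := by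
  obtain ⟨hxs, z, hzx, hzs⟩ := hx
  have hxz : rank x = rank z + 1 := hP.rank_covBy z x hzx
  have hu : ∀ w, w ⋖ x → w = z := by
    rcases hxs with h0 | ⟨w, -, hw⟩
    · omega
    · exact fun w' hw' => (hw w' hw').trans (hw z hzx).symm
  by_contra! hcon
  let x₀ : {p : P // rank p = rank z + 1} := ⟨x, hxz⟩
  have hx₀ : x₀ ∈ commonUpCovers rank (rank z + 1) z z := by simp [x₀, hzx]
  have hcard : #(commonUpCovers rank (rank z + 2) x x) ≤
      #((commonUpCovers rank (rank z + 1) z z).erase x₀) := by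
    refine card_le_card_of_forall_subsingleton (fun y w => w.1 ⋖ y.1)
      (fun y hy => ?_) (fun w hw => ?_)
    · have hxy : x ⋖ y.1 := (mem_commonUpCovers.1 hy).1
      obtain ⟨w, hwy, hwx⟩ := hcon y.1 hxy
      have hw : rank w = rank z + 1 := by have := hP.rank_covBy w y hwy; have := y.2; omega
      obtain ⟨v, hvx, hvw⟩ :=
        hP.exists_covBy_covBy_of_covBy_covBy hxz (Ne.symm hwx) hxy hwy
      refine ⟨⟨w, hw⟩, mem_erase.2 ⟨fun h => hwx (congrArg Subtype.val h), ?_⟩, hwy⟩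
      simp [← hu v hvx, hvw]
    · have hne : x ≠ w.1 := fun h => (mem_erase.1 hw).1 (Subtype.ext h.symm)
      intro a ha b hb
      exact card_le_one.1 (hP.card_commonUpCovers_le_one hxz w.2 hne hu) a (by simp_all) b
        (by simp_all)
  have hup := hP.card_commonUpCovers_self_of_covBy_unique hzx hu
  have hz := hP.card_commonUpCovers_self_le_of_isSingletonElem hzs
  rw [card_erase_of_mem hx₀] at hcard
  omega

theorem exists_covBy_isThreadElem (hP : IsDifferentialPoset rank r) {x : P}
    (hx : IsThreadElem rank x) : ∃ y, x ⋖ y ∧ IsThreadElem rank y := by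
  obtain ⟨y, hxy, hy⟩ := hP.exists_covBy_forall_covBy_eq hx
  exact ⟨y, hxy, Or.inr ⟨x, hxy, hy⟩, x, hxy, hx.1⟩

end IsDifferentialPoset

/-- Miller–Reiner. In an `r`-differential poset, every thread element
`t₀` extends to an infinite *thread*: a sequence `t₀ ⋖ t₁ ⋖ t₂ ⋖ ⋯` in which every `t_i`
is a thread element. -/
theorem thread_extends {P : Type*} [PartialOrder P] (rank : P → ℕ)
    [∀ m : ℕ, Fintype {x : P // rank x = m}] (r : ℕ)
    (hP : IsDifferentialPoset rank r) (t₀ : P) (ht₀ : IsThreadElem rank t₀) :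
    ∃ t : ℕ → P, t 0 = t₀ ∧ (∀ i : ℕ, t i ⋖ t (i + 1)) ∧
      ∀ i : ℕ, IsThreadElem rank (t i) := by
  choose! next hnext using fun x (hx : IsThreadElem rank x) => hP.exists_covBy_isThreadElem hx
  have hthread : ∀ i, IsThreadElem rank (next^[i] t₀) := by
    intro i
    induction i with
    | zero => exact ht₀
    | succ i ih => rw [Function.iterate_succ_apply']; exact (hnext _ ih).2
  refine ⟨fun i => next^[i] t₀, rfl, fun i => ?_, hthread⟩
  simpa only [Function.iterate_succ_apply'] using (hnext _ (hthread i)).1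
end

section
/- Let P be an r-differential poset and let τ_n denote the number of thread elements of rank n. Then τ is nondecreasing: τ_n ≤ τ_{n+1} for all n ≥ 0. -/
/-!
Comparing the `(x', x)` entries of `D U - U D = r • I` shows that distinct elements of equal
rank have as many common upper covers as common lower covers, and that every element has `r`
more upper covers than lower covers.

Let `x` be a thread element covering the singleton `z`. If no upper cover of `x` were a
singleton, every upper cover `y` of `x` would also cover some `g y ≠ x`. Then `x` and `g y` share
the upper cover `y`, hence a lower cover, which can only be `z`; and they share no other upper
cover. So `g` injects the `r + 1` upper covers of `x` into the at most `r` upper covers of `z`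
other than `x`. Hence `x` has a singleton upper cover, which is a thread element, and the choice
of one for each `x` is injective because it covers nothing but `x`.
-/

theorem Fintype.sum_subtype_boole_eq_ncard {α : Type*} {p : α → Prop} [Fintype (Subtype p)]
    (q : α → Prop) [DecidablePred q] (hq : ∀ a, q a → p a) :
    ∑ a : Subtype p, (if q a then (1 : ℚ) else 0) = {a | q a}.ncard := by
  rw [Finset.sum_boole, ← Fintype.card_subtype, ← Nat.card_eq_fintype_card,
    ← Nat.card_coe_set_eq, Nat.card_congr (Equiv.subtypeSubtypeEquivSubtype (hq _))]
  rfl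

theorem finite_of_forall_rank_eq {α : Type*} {rank : α → ℕ} {m : ℕ}
    [Finite {x : α // rank x = m}] {s : Set α} (hs : ∀ y ∈ s, rank y = m) : s.Finite :=
  (Set.finite_range (Subtype.val : {x : α // rank x = m} → α)).subset
    fun y hy => ⟨⟨y, hs y hy⟩, rfl⟩

section
open Classical
variable {P : Type*} [PartialOrder P] {rank : P → ℕ}
  [∀ m : ℕ, Fintype {x : P // rank x = m}] {r : ℕ}

theorem upMap_apply (n : ℕ) (v : {x : P // rank x = n} → ℚ) (y : {y : P // rank y = n + 1}) :
    upMap rank n v y = ∑ x : {x : P // rank x = n}, (if (x : P) ⋖ y then 1 else 0) * v x := rfl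

theorem downMap_apply (n : ℕ) (v : {x : P // rank x = n} → ℚ)
    (z : {z : P // rank z = n - 1}) :
    downMap rank n v z = ∑ x : {x : P // rank x = n}, (if (z : P) ⋖ x then 1 else 0) * v x :=
  rfl

theorem upMap_single_one (n : ℕ) (x : {x : P // rank x = n}) (y : {y : P // rank y = n + 1}) :
    upMap rank n (Pi.single x 1) y = if (x : P) ⋖ y then 1 else 0 := by
  simp [upMap_apply, Pi.single_apply]

theorem downMap_single_one (n : ℕ) (x : {x : P // rank x = n}) (z : {z : P // rank z = n - 1}) :
    downMap rank n (Pi.single x 1) z = if (z : P) ⋖ x then 1 else 0 := by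
  simp [downMap_apply, Pi.single_apply]

theorem downMap_upMap_single_one (hcov : ∀ x y : P, x ⋖ y → rank y = rank x + 1) (n : ℕ)
    (x x' : {x : P // rank x = n}) :
    downMap rank (n + 1) (upMap rank n (Pi.single x 1)) x'
      = ({y | (x' : P) ⋖ y ∧ (x : P) ⋖ y}.ncard : ℚ) := by
  simp only [downMap_apply, upMap_single_one, ite_zero_mul_ite_zero, mul_one]
  refine Fintype.sum_subtype_boole_eq_ncard (fun y => (x' : P) ⋖ y ∧ (x : P) ⋖ y)
    fun y h => ?_
  rw [hcov _ _ h.1, x'.2]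

theorem upMap_downMap_single_one (hcov : ∀ x y : P, x ⋖ y → rank y = rank x + 1) (n : ℕ)
    (x x' : {x : P // rank x = n + 1}) :
    upMap rank n (downMap rank (n + 1) (Pi.single x 1)) x'
      = ({z | z ⋖ (x' : P) ∧ z ⋖ (x : P)}.ncard : ℚ) := by
  simp only [upMap_apply, downMap_single_one, ite_zero_mul_ite_zero, mul_one]
  refine Fintype.sum_subtype_boole_eq_ncard (fun z => z ⋖ (x' : P) ∧ z ⋖ (x : P))
    fun z h => ?_
  have := hcov _ _ h.1
  rw [x'.2] at this
  omega

theorem IsDifferentialPoset.ncard_covBy_inter_eq_add_ite (hP : IsDifferentialPoset rank r) (n : ℕ)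
    (x x' : {x : P // rank x = n}) :
    ({y | (x' : P) ⋖ y ∧ (x : P) ⋖ y}.ncard : ℚ)
      = {z | z ⋖ (x' : P) ∧ z ⋖ (x : P)}.ncard + if x' = x then (r : ℚ) else 0 := by
  cases n with
  | zero =>
    have hlow : {z | z ⋖ (x' : P) ∧ z ⋖ (x : P)} = ∅ :=
      Set.eq_empty_of_forall_notMem fun z hz => by
        have := hP.rank_covBy _ _ hz.1
        omega
    have h := congr($(hP.diff_zero) (Pi.single x 1) x')
    rw [LinearMap.comp_apply, downMap_upMap_single_one hP.rank_covBy] at h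
    simp [h, hlow, Pi.single_apply]
  | succ m =>
    have h := congr($(hP.diff m) (Pi.single x 1) x')
    rw [LinearMap.sub_apply, Pi.sub_apply, LinearMap.comp_apply, LinearMap.comp_apply,
      downMap_upMap_single_one hP.rank_covBy, upMap_downMap_single_one hP.rank_covBy] at h
    simp only [LinearMap.smul_apply, LinearMap.id_apply, Pi.smul_apply, Pi.single_apply,
      smul_eq_mul, mul_ite, mul_one, mul_zero] at h
    linarith

end

section
variable {P : Type*} [PartialOrder P] {rank : P → ℕ}

theorem IsSingletonElem.subsingleton_setOf_covBy
    (hcov : ∀ x y : P, x ⋖ y → rank y = rank x + 1) {x : P} (hx : IsSingletonElem rank x) :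
    {z | z ⋖ x}.Subsingleton := by
  rcases hx with hx | ⟨z, -, huniq⟩
  · intro z hz
    have := hcov z x hz
    omega
  · intro a ha b hb
    rw [huniq a ha, huniq b hb]

theorem exists_covBy_ne_of_not_isSingletonElem {x y : P} (hy : ¬ IsSingletonElem rank y)
    (hxy : x ⋖ y) : ∃ w, w ⋖ y ∧ w ≠ x := by
  by_contra! h
  exact hy (Or.inr ⟨x, hxy, h⟩)

variable [∀ m : ℕ, Fintype {x : P // rank x = m}] {r : ℕ}

theorem finite_setOf_covBy (hcov : ∀ x y : P, x ⋖ y → rank y = rank x + 1) (x : P) :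
    {y | x ⋖ y}.Finite :=
  finite_of_forall_rank_eq fun y hy => hcov x y hy

theorem IsDifferentialPoset.ncard_covBy_eq (hP : IsDifferentialPoset rank r) (x : P) :
    {y | x ⋖ y}.ncard = {z | z ⋖ x}.ncard + r := by
  have h := hP.ncard_covBy_inter_eq_add_ite (rank x) ⟨x, rfl⟩ ⟨x, rfl⟩
  simp only [and_self, if_true] at h
  exact_mod_cast h

theorem IsDifferentialPoset.ncard_covBy_inter_eq (hP : IsDifferentialPoset rank r) {x w : P}
    (hrank : rank w = rank x) (hne : w ≠ x) :
    {y | w ⋖ y ∧ x ⋖ y}.ncard = {z | z ⋖ w ∧ z ⋖ x}.ncard := by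
  have h := hP.ncard_covBy_inter_eq_add_ite (rank x) ⟨x, rfl⟩ ⟨w, hrank⟩
  rw [if_neg fun h => hne (congrArg Subtype.val h), add_zero] at h
  exact_mod_cast h

theorem IsDifferentialPoset.covBy_of_isSingletonElem (hP : IsDifferentialPoset rank r)
    {x y z w : P} (hx : IsSingletonElem rank x) (hzx : z ⋖ x) (hxy : x ⋖ y) (hwy : w ⋖ y)
    (hwx : w ≠ x) : z ⋖ w := by
  have hrank : rank w = rank x := by
    have := hP.rank_covBy _ _ hxy
    have := hP.rank_covBy _ _ hwy
    omega
  have hupper : {v | w ⋖ v ∧ x ⋖ v}.ncard ≠ 0 :=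
    Set.ncard_ne_zero_of_mem (show y ∈ {v | w ⋖ v ∧ x ⋖ v} from ⟨hwy, hxy⟩)
      ((finite_setOf_covBy hP.rank_covBy x).subset fun v hv => hv.2)
  rw [hP.ncard_covBy_inter_eq hrank hwx] at hupper
  obtain ⟨u, huw, hux⟩ := Set.nonempty_of_ncard_ne_zero hupper
  rwa [hx.subsingleton_setOf_covBy hP.rank_covBy hux hzx] at huw

theorem IsDifferentialPoset.subsingleton_covBy_inter (hP : IsDifferentialPoset rank r)
    {x w : P} (hx : IsSingletonElem rank x) (hrank : rank w = rank x) (hwx : w ≠ x) :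
    {y | w ⋖ y ∧ x ⋖ y}.Subsingleton := by
  have hlow := hx.subsingleton_setOf_covBy hP.rank_covBy
  refine (Set.ncard_le_one ((finite_setOf_covBy hP.rank_covBy x).subset fun v hv => hv.2)).mp ?_
  calc {y | w ⋖ y ∧ x ⋖ y}.ncard = {z | z ⋖ w ∧ z ⋖ x}.ncard :=
        hP.ncard_covBy_inter_eq hrank hwx
    _ ≤ {z | z ⋖ x}.ncard := Set.ncard_le_ncard (fun z hz => hz.2) hlow.finite
    _ ≤ 1 := (Set.ncard_le_one hlow.finite).mpr hlow

theorem IsDifferentialPoset.exists_isSingletonElem_covBy (hP : IsDifferentialPoset rank r)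
    {x : P} (hx : IsThreadElem rank x) : ∃ y, x ⋖ y ∧ IsSingletonElem rank y := by
  obtain ⟨hxs, z, hzx, hzs⟩ := hx
  by_contra! hcon
  choose! g hg_cov hg_ne using fun y (hy : x ⋖ y) =>
    exists_covBy_ne_of_not_isSingletonElem (hcon y hy) hy
  have hg_rank : ∀ y, x ⋖ y → rank (g y) = rank x := fun y hy => by
    have := hP.rank_covBy _ _ hy
    have := hP.rank_covBy _ _ (hg_cov y hy)
    omega
  have hmaps : Set.MapsTo g {y | x ⋖ y} ({w | z ⋖ w} \ {x}) := fun y hy =>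
    ⟨hP.covBy_of_isSingletonElem hxs hzx hy (hg_cov y hy) (hg_ne y hy), hg_ne y hy⟩
  have hinj : Set.InjOn g {y | x ⋖ y} := fun y hy y' hy' hgg =>
    hP.subsingleton_covBy_inter hxs (hg_rank y hy) (hg_ne y hy) ⟨hg_cov y hy, hy⟩
      ⟨hgg ▸ hg_cov y' hy', hy'⟩
  have hx_low : {u | u ⋖ x}.ncard = 1 := Set.ncard_eq_one.mpr
    ⟨z, (hxs.subsingleton_setOf_covBy hP.rank_covBy).eq_singleton_of_mem hzx⟩
  have hz_low : {u | u ⋖ z}.ncard ≤ 1 :=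
    have hsub := hzs.subsingleton_setOf_covBy hP.rank_covBy
    (Set.ncard_le_one hsub.finite).mpr hsub
  have hcard := Set.ncard_le_ncard_of_injOn g hmaps hinj
    ((finite_setOf_covBy hP.rank_covBy z).sdiff)
  rw [Set.ncard_sdiff_singleton_of_mem (show x ∈ {w | z ⋖ w} from hzx), hP.ncard_covBy_eq,
    hP.ncard_covBy_eq, hx_low] at hcard
  omega

end

/-- In an `r`-differential poset, the number `τ_n` of thread elements of
rank `n` is nondecreasing in `n`. -/
theorem thread_count_mono {P : Type*} [PartialOrder P] (rank : P → ℕ)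
    [∀ m : ℕ, Fintype {x : P // rank x = m}] (r : ℕ)
    (hP : IsDifferentialPoset rank r) (n : ℕ) :
    Set.ncard {x : P | rank x = n ∧ IsThreadElem rank x}
      ≤ Set.ncard {x : P | rank x = n + 1 ∧ IsThreadElem rank x} := by
  choose! f hf_cov hf_sing using fun x (hx : IsThreadElem rank x) =>
    hP.exists_isSingletonElem_covBy hx
  refine Set.ncard_le_ncard_of_injOn f ?_ ?_ (finite_of_forall_rank_eq fun x hx => hx.1)
  · rintro x ⟨hxn, hx⟩
    exact ⟨by rw [hP.rank_covBy _ _ (hf_cov x hx), hxn], hf_sing x hx, x, hf_cov x hx, hx.1⟩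
  · rintro a ⟨-, ha⟩ b ⟨-, hb⟩ hab
    exact (hf_sing a ha).subsingleton_setOf_covBy hP.rank_covBy (hf_cov a ha)
      (hab ▸ hf_cov b hb)
end
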